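/- arXiv:2502.05528 — 5 statements merged into one kernel-verified Lean document; each statement's English description precedes it below -/
import Mathlib

section
/- Let F/K be an extension of complete nonarchimedean fields and ρ > 0. Inside the ring F(t)_ρ (the completion of F(t) for the ρ-Gauss norm, with variable s), the intersection of the subring F⟨ρ/s⟩ (power series in s⁻¹ converging for |s| ≥ ρ) with the subring F[[s/ρ]]_an (analytic elements on the open disc |s| < ρ) equals F. -/
/-!
Approximate `x` by `a + g` with `a ∈ F` and `g` a polynomial in `s⁻¹` without constant term, and
by `P(s)/Q(s)` with all roots of `Q` of norm `≥ ρ`. The root condition means that the constant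
coefficient of `Q` carries its `ρ`-Gauss norm. After clearing the denominators `Q` and `s^m`, the
coefficient of `s^m g · Q - s^m P` at the least index where `s^m g` attains its Gauss norm does
not see `P` and has norm `‖s^m g‖ ‖Q(s)‖`; hence `‖g‖ ≤ ‖g - (P/Q - a)‖`. The ultrametric
inequality then bounds `‖x - a‖` by the approximation errors, so `x` lies in the closed
subfield `F`.
-/

open Polynomial

@[simp]
theorem NormedField.toAbsoluteValue_apply {K : Type*} [NormedField K] (x : K) :
    NormedField.toAbsoluteValue K x = ‖x‖ := rfl

theorem Polynomial.coeff_toLaurent_natCast {R : Type*} [Semiring R] (P : R[X]) (n : ℕ) :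
    (toLaurent P).coeff n = P.coeff n :=
  Finsupp.mapDomain_apply Nat.castEmbedding.injective _ n

namespace Polynomial

section Ultrametric

variable {K : Type*} [NormedField K] [IsUltrametricDist K]

theorem exists_norm_coeff_mul_eq_gaussNorm_mul {r : ℝ} (hr : 0 < r) {p q : K[X]} (hp : p ≠ 0)
    (hq0 : q.coeff 0 ≠ 0) (hq : q.gaussNorm (NormedField.toAbsoluteValue K) r = ‖q.coeff 0‖) :
    ∃ i, p.coeff i ≠ 0 ∧ ‖(p * q).coeff i‖ * r ^ i =
      p.gaussNorm (NormedField.toAbsoluteValue K) r * ‖q.coeff 0‖ := by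
  obtain ⟨i, hi, hlt⟩ := p.exists_min_eq_gaussNorm (NormedField.toAbsoluteValue K) hr.le
  simp only [NormedField.toAbsoluteValue_apply] at hi hlt
  set G := p.gaussNorm (NormedField.toAbsoluteValue K) r
  have hG : 0 < G := (gaussNorm_nonneg _ p hr.le).lt_of_ne' <| by
    rwa [Ne, gaussNorm_eq_zero_iff _ _ (fun x => by simp) hr]
  have hpi : p.coeff i ≠ 0 := fun h => hG.ne' (by simpa [h] using hi)
  refine ⟨i, hpi, ?_⟩
  have hri : 0 < r ^ i := pow_pos hr i
  rw [coeff_mul, IsNonarchimedean.apply_sum_eq_of_lt IsUltrametricDist.isNonarchimedean_norm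
    (fun _ => (norm_neg _).symm) (k := (i, 0)) (by simp), norm_mul, mul_right_comm, ← hi]
  rintro ⟨a, b⟩ hab hne
  rw [Finset.HasAntidiagonal.mem_antidiagonal] at hab
  have ha : a < i := by grind
  refine lt_of_mul_lt_mul_right ?_ hri.le
  calc ‖p.coeff a * q.coeff b‖ * r ^ i
        = (‖p.coeff a‖ * r ^ a) * (‖q.coeff b‖ * r ^ b) := by
          rw [norm_mul, ← hab, pow_add]; ring
    _ ≤ (‖p.coeff a‖ * r ^ a) * ‖q.coeff 0‖ := by
        gcongr
        simpa [hq] using le_gaussNorm (NormedField.toAbsoluteValue K) q hr.le b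
    _ < G * ‖q.coeff 0‖ := by gcongr; exact hlt a ha
    _ = ‖p.coeff (i, 0).1 * q.coeff (i, 0).2‖ * r ^ i := by rw [norm_mul, hi]; ring

theorem gaussNorm_X_sub_C_of_le_norm {r : ℝ} (hr : 0 ≤ r) {z : K} (hz : r ≤ ‖z‖) :
    (X - C z).gaussNorm (NormedField.toAbsoluteValue K) r = ‖z‖ := by
  refine le_antisymm ?_ ?_
  · rw [sub_eq_add_neg, ← C_neg]
    refine (isNonarchimedean_gaussNorm _ IsUltrametricDist.isNonarchimedean_norm hr _ _).trans ?_
    rw [← monomial_one_one_eq_X, gaussNorm_monomial, gaussNorm_C]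
    simpa using hz
  · have := le_gaussNorm (NormedField.toAbsoluteValue K) (X - C z) hr 0
    rw [coeff_sub] at this
    simpa using this

theorem gaussNorm_eq_norm_coeff_zero_of_forall_mem_roots [IsAlgClosed K] {r : ℝ} (hr : 0 < r)
    {Q : K[X]} (hroots : ∀ z ∈ Q.roots, r ≤ ‖z‖) :
    Q.gaussNorm (NormedField.toAbsoluteValue K) r = ‖Q.coeff 0‖ := by
  have := gaussNorm_isAbsoluteValue (v := NormedField.toAbsoluteValue K)
    IsUltrametricDist.isNonarchimedean_norm hr
  let v := IsAbsoluteValue.toAbsoluteValue (gaussNorm (NormedField.toAbsoluteValue K) r)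
  change v Q = NormedField.toAbsoluteValue K (constantCoeff Q)
  have hsplit :=
    C_leadingCoeff_mul_prod_multiset_X_sub_C (IsAlgClosed.card_roots_eq_natDegree (p := Q))
  rw [← hsplit]
  simp only [map_mul, map_multiset_prod, Multiset.map_map]
  congr 1
  · simp [v]
  · congr 1
    refine Multiset.map_congr rfl fun z hz => ?_
    simp [v, gaussNorm_X_sub_C_of_le_norm hr.le (hroots z hz)]

end Ultrametric

theorem gaussNorm_map {F K : Type*} [NormedField F] [NormedField K] {f : F →+* K}
    (hf : ∀ a, ‖f a‖ = ‖a‖) (r : ℝ) (Q : F[X]) :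
    (Q.map f).gaussNorm (NormedField.toAbsoluteValue K) r =
      Q.gaussNorm (NormedField.toAbsoluteValue F) r := by
  rw [gaussNorm, gaussNorm, support_map_of_injective _ f.injective]
  simp [hf]

theorem coeff_zero_ne_zero_of_forall_eval₂_eq_zero {F K : Type*} [Semiring F] [NormedField K]
    {f : F →+* K} {r : ℝ} (hr : 0 < r) {Q : F[X]}
    (hroots : ∀ z : K, Q.eval₂ f z = 0 → r ≤ ‖z‖) : Q.coeff 0 ≠ 0 := fun h0 =>
  (hr.trans_le (hroots 0 (by rw [eval₂_at_zero, h0, map_zero]))).ne' norm_zero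

theorem gaussNorm_eq_norm_coeff_zero_of_forall_eval₂_eq_zero {F K : Type*} [NormedField F]
    [NormedField K] [IsUltrametricDist K] [IsAlgClosed K] {f : F →+* K}
    (hf : ∀ a, ‖f a‖ = ‖a‖) {r : ℝ} (hr : 0 < r) {Q : F[X]}
    (hroots : ∀ z : K, Q.eval₂ f z = 0 → r ≤ ‖z‖) :
    Q.gaussNorm (NormedField.toAbsoluteValue F) r = ‖Q.coeff 0‖ := by
  rw [← gaussNorm_map hf, ← hf, ← coeff_map]
  exact gaussNorm_eq_norm_coeff_zero_of_forall_mem_roots hr fun z hz =>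
    hroots z (by rw [← eval_map]; exact (mem_roots'.1 hz).2)

end Polynomial

section GaussNorm

variable {F L : Type*} [NormedField F] [NormedField L]

def HasGaussNorm (j : F →+* L) (s : L) (ρ : ℝ) : Prop :=
  ∀ c : ℤ →₀ F, ‖∑ i ∈ c.support, j (c i) * s ^ i‖₊ =
    c.support.sup fun i => ‖c i‖₊ * ρ.toNNReal ^ i

theorem exists_eval₂_eq_pow_mul_sum {j : F →+* L} {s : L} (hs : s ≠ 0) {c : ℤ →₀ F}
    (hc : ∀ i ∈ c.support, i < 0) :
    ∃ (m : ℕ) (p : F[X]), p.degree < m ∧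
      p.eval₂ j s = s ^ m * ∑ i ∈ c.support, j (c i) * s ^ i := by
  set m := c.support.sup Int.natAbs
  have hm : ∀ i ∈ c.support, 0 ≤ i + m ∧ (i + m).toNat < m := fun i hi => by
    have := Finset.le_sup (f := Int.natAbs) hi
    have := hc i hi
    omega
  refine ⟨m, ∑ i ∈ c.support, monomial (i + m).toNat (c i), ?_, ?_⟩
  · refine (degree_sum_le _ _).trans_lt <| (Finset.sup_lt_iff (WithBot.bot_lt_coe m)).2 fun i hi =>
      (degree_monomial_le _ _).trans_lt (WithBot.coe_lt_coe.2 (hm i hi).2)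
  · rw [eval₂_finsetSum, Finset.mul_sum]
    refine Finset.sum_congr rfl fun i hi => ?_
    rw [eval₂_monomial, ← zpow_natCast, Int.toNat_of_nonneg (hm i hi).1, zpow_add₀ hs,
      zpow_natCast]
    ring

variable {j : F →+* L} {s : L} {ρ : ℝ}

theorem HasGaussNorm.norm_eval₂_eq_gaussNorm (h : HasGaussNorm j s ρ) (hρ : 0 ≤ ρ)
    (P : F[X]) :
    ‖P.eval₂ j s‖ = P.gaussNorm (NormedField.toAbsoluteValue F) ρ := by
  rcases P.support.eq_empty_or_nonempty with hP | hP
  · simp [support_eq_empty.1 hP]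
  have key := h (toLaurent P).coeff
  simp only [LaurentPolynomial.support_coeff_toLaurent, Finset.sum_map, Finset.sup_map,
    Function.comp_def, Nat.castEmbedding_apply, coeff_toLaurent_natCast, zpow_natCast] at key
  rw [gaussNorm, dif_pos hP, ← coe_nnnorm, eval₂_eq_sum, Polynomial.sum_def, key,
    ← Finset.sup'_eq_sup hP, Finset.apply_sup'_eq_sup'_comp hP _ NNReal.coe_max]
  simp [Function.comp_def, Real.coe_toNNReal _ hρ]

variable [IsUltrametricDist F]

theorem HasGaussNorm.norm_eval₂_mul_le (h : HasGaussNorm j s ρ) (hρ : 0 < ρ) {p Q : F[X]}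
    {m : ℕ} (hpm : p.degree < m) (hQ0 : Q.coeff 0 ≠ 0)
    (hQ : Q.gaussNorm (NormedField.toAbsoluteValue F) ρ = ‖Q.coeff 0‖) (P : F[X]) :
    ‖p.eval₂ j s‖ * ‖Q.eval₂ j s‖ ≤ ‖(p * Q - X ^ m * P).eval₂ j s‖ := by
  rcases eq_or_ne p 0 with rfl | hp
  · rw [eval₂_zero, norm_zero, zero_mul]
    exact norm_nonneg _
  obtain ⟨i, hpi, hi⟩ := exists_norm_coeff_mul_eq_gaussNorm_mul hρ hp hQ0 hQ
  have him : i < m := by exact_mod_cast (le_degree_of_ne_zero hpi).trans_lt hpm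
  simp only [h.norm_eval₂_eq_gaussNorm hρ.le, hQ, ← hi]
  calc ‖(p * Q).coeff i‖ * ρ ^ i = ‖(p * Q - X ^ m * P).coeff i‖ * ρ ^ i := by
        rw [coeff_sub, coeff_X_pow_mul', if_neg (by omega), sub_zero]
    _ ≤ _ := le_gaussNorm (NormedField.toAbsoluteValue F) _ hρ.le i

theorem HasGaussNorm.norm_le_norm_sub_div (h : HasGaussNorm j s ρ) (hρ : 0 < ρ) (hs : s ≠ 0)
    {c : ℤ →₀ F} (hc : ∀ i ∈ c.support, i < 0) {Q : F[X]} (hQ0 : Q.coeff 0 ≠ 0)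
    (hQ : Q.gaussNorm (NormedField.toAbsoluteValue F) ρ = ‖Q.coeff 0‖) (P : F[X]) :
    ‖∑ i ∈ c.support, j (c i) * s ^ i‖ ≤
      ‖∑ i ∈ c.support, j (c i) * s ^ i - P.eval₂ j s / Q.eval₂ j s‖ := by
  obtain ⟨m, p, hpm, hp⟩ := exists_eval₂_eq_pow_mul_sum (j := j) hs hc
  set g := ∑ i ∈ c.support, j (c i) * s ^ i
  have hQs : 0 < ‖Q.eval₂ j s‖ := by
    rw [h.norm_eval₂_eq_gaussNorm hρ.le, hQ]; exact norm_pos_iff.2 hQ0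
  have hsm : 0 < ‖s ^ m‖ := norm_pos_iff.2 (pow_ne_zero m hs)
  have key := h.norm_eval₂_mul_le hρ hpm hQ0 hQ P
  have hid : (p * Q - X ^ m * P).eval₂ j s =
      s ^ m * Q.eval₂ j s * (g - P.eval₂ j s / Q.eval₂ j s) := by
    rw [eval₂_sub, eval₂_mul, eval₂_mul, eval₂_X_pow, hp]
    field_simp [norm_pos_iff.1 hQs]
  rw [hid, hp, norm_mul, norm_mul, norm_mul, mul_right_comm] at key
  exact le_of_mul_le_mul_left key (mul_pos hsm hQs)

theorem HasGaussNorm.norm_sub_coeff_zero_le (h : HasGaussNorm j s ρ) (hρ : 0 < ρ) (hs : s ≠ 0)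
    {c : ℤ →₀ F} (hc : ∀ i ∈ c.support, i ≤ 0) {Q : F[X]} (hQ0 : Q.coeff 0 ≠ 0)
    (hQ : Q.gaussNorm (NormedField.toAbsoluteValue F) ρ = ‖Q.coeff 0‖) (P : F[X]) :
    ‖∑ i ∈ c.support, j (c i) * s ^ i - j (c 0)‖ ≤
      ‖∑ i ∈ c.support, j (c i) * s ^ i - P.eval₂ j s / Q.eval₂ j s‖ := by
  have hsplit : ∑ i ∈ c.support, j (c i) * s ^ i =
      j (c 0) + ∑ i ∈ (c.erase 0).support, j (c.erase 0 i) * s ^ i := by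
    have := (Finsupp.add_sum_erase' c 0 (fun i a => j a * s ^ i) (fun _ => by simp)).symm
    rw [zpow_zero, mul_one] at this
    exact this
  have htail : ∀ i ∈ (c.erase 0).support, i < 0 := fun i hi => by
    rw [Finsupp.support_erase, Finset.mem_erase] at hi
    exact lt_of_le_of_ne (hc i hi.2) hi.1
  have hQs : Q.eval₂ j s ≠ 0 := by
    rw [← norm_pos_iff, h.norm_eval₂_eq_gaussNorm hρ.le, hQ]; exact norm_pos_iff.2 hQ0
  have key := h.norm_le_norm_sub_div hρ hs htail hQ0 hQ (P - C (c 0) * Q)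
  rw [hsplit, add_sub_cancel_left]
  convert key using 2
  rw [eval₂_sub, eval₂_mul, eval₂_C]
  field_simp
  ring

theorem HasGaussNorm.dist_coeff_zero_le [IsUltrametricDist L] (h : HasGaussNorm j s ρ)
    (hρ : 0 < ρ) (hs : s ≠ 0) {c : ℤ →₀ F} (hc : ∀ i ∈ c.support, i ≤ 0) {Q : F[X]}
    (hQ0 : Q.coeff 0 ≠ 0) (hQ : Q.gaussNorm (NormedField.toAbsoluteValue F) ρ = ‖Q.coeff 0‖)
    (P : F[X]) (x : L) :
    dist x (j (c 0)) ≤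
      max ‖x - ∑ i ∈ c.support, j (c i) * s ^ i‖ ‖x - P.eval₂ j s / Q.eval₂ j s‖ := by
  have key := h.norm_sub_coeff_zero_le hρ hs hc hQ0 hQ P
  set g := ∑ i ∈ c.support, j (c i) * s ^ i
  simp only [← dist_eq_norm] at key ⊢
  have hg : dist g (j (c 0)) ≤ max (dist x g) (dist x (P.eval₂ j s / Q.eval₂ j s)) := calc
    _ ≤ dist g (P.eval₂ j s / Q.eval₂ j s) := key
    _ ≤ max (dist g x) (dist x (P.eval₂ j s / Q.eval₂ j s)) := dist_triangle_max _ _ _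
    _ = _ := by rw [dist_comm g x]
  exact (dist_triangle_max _ g _).trans (max_le (le_max_left _ _) hg)

end GaussNorm

theorem stmt2_general {F L Ω : Type*}
    [NontriviallyNormedField F] [CompleteSpace F] [IsUltrametricDist F]
    [NontriviallyNormedField L] [IsUltrametricDist L]
    [NormedField Ω] [IsUltrametricDist Ω] [IsAlgClosed Ω]
    (ρ : ℝ) (hρ : 0 < ρ)
    (j : F →+* L) (hj : ∀ a : F, ‖j a‖ = ‖a‖)
    (jΩ : F →+* Ω) (hjΩ : ∀ a : F, ‖jΩ a‖ = ‖a‖)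
    (s : L) (hs : s ≠ 0)
    -- Gauss norm property: for every Laurent polynomial `∑ c_i s^i`,
    -- `‖∑ c_i s^i‖ = max_i ‖c_i‖ ρ^i`
    (hGauss : ∀ c : ℤ →₀ F,
      ‖∑ i ∈ c.support, j (c i) * s ^ i‖₊ =
        c.support.sup fun i => ‖c i‖₊ * (Real.toNNReal ρ) ^ i) :
    -- `F⟨ρ/s⟩` : closure of polynomials in `s⁻¹`
    {x : L | ∀ ε : ℝ, 0 < ε → ∃ c : ℤ →₀ F, (∀ i ∈ c.support, i ≤ 0) ∧
        ‖x - ∑ i ∈ c.support, j (c i) * s ^ i‖ ≤ ε} ∩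
    -- `F[[s/ρ]]_an` : closure of rational functions with no poles in `|s| < ρ`
    {x : L | ∀ ε : ℝ, 0 < ε → ∃ P Q : Polynomial F, Q ≠ 0 ∧
        (∀ z : Ω, Polynomial.eval₂ jΩ z Q = 0 → ρ ≤ ‖z‖) ∧
        ‖x - Polynomial.eval₂ j s P / Polynomial.eval₂ j s Q‖ ≤ ε} =
    Set.range j := by
  refine Set.Subset.antisymm ?_ ?_
  · rintro x ⟨hA, hB⟩
    have hclosed : IsClosed (Set.range j) :=
      (AddMonoidHomClass.isometry_of_norm j hj).isClosedEmbedding.isClosed_range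
    rw [← hclosed.closure_eq, Metric.mem_closure_iff]
    intro ε hε
    obtain ⟨c, hc, hxc⟩ := hA (ε / 2) (half_pos hε)
    obtain ⟨P, Q, -, hroots, hxPQ⟩ := hB (ε / 2) (half_pos hε)
    have hQ0 := coeff_zero_ne_zero_of_forall_eval₂_eq_zero hρ hroots
    have hQ := gaussNorm_eq_norm_coeff_zero_of_forall_eval₂_eq_zero hjΩ hρ hroots
    refine ⟨j (c 0), Set.mem_range_self _, ?_⟩
    calc dist x (j (c 0)) ≤ _ := HasGaussNorm.dist_coeff_zero_le hGauss hρ hs hc hQ0 hQ P x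
      _ ≤ ε / 2 := max_le hxc hxPQ
      _ < ε := half_lt_self hε
  · rintro x ⟨a, rfl⟩
    refine ⟨fun ε hε => ⟨Finsupp.single 0 a, fun i hi => ?_, ?_⟩,
      fun ε hε => ⟨C a, 1, one_ne_zero, by simp, by simp [hε.le]⟩⟩
    · exact (Finset.mem_singleton.1 (Finsupp.support_single_subset hi)).le
    · change ‖j a - (Finsupp.single 0 a).sum fun i b => j b * s ^ i‖ ≤ ε
      rw [Finsupp.sum_single_index (by simp)]
      simp [hε.le]

/-- let `F/K`-style `F` be a complete nonarchimedean field, `ρ > 0`, and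
let `L` be (a model of) the completion `F(t)_ρ` of the rational function field `F(s)`
with respect to the `ρ`-Gauss norm: a complete nonarchimedean field equipped with an
isometric embedding `j : F → L` and an element `s` with the Gauss-norm property for
Laurent polynomials, such that the subfield generated by `j(F)` and `s` is dense.
Let `Ω` be an algebraically closed nonarchimedean field isometrically containing `F`
(where roots of denominators are measured).  Then the intersection of
`F⟨ρ/s⟩` (the closure of `F[s⁻¹]`, i.e. of Laurent polynomials supported in degrees
`≤ 0`) with `F[[s/ρ]]_an` (the ring of analytic elements on the open disc `|s| < ρ`,
i.e. the closure of the rational functions `P(s)/Q(s)` where `Q` has no root of norm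
`< ρ`) is exactly `F`, i.e. the range of `j`. -/
theorem stmt2 {F L Ω : Type*}
    [NontriviallyNormedField F] [CompleteSpace F] [IsUltrametricDist F]
    [NontriviallyNormedField L] [CompleteSpace L] [IsUltrametricDist L]
    [NormedField Ω] [IsUltrametricDist Ω] [IsAlgClosed Ω]
    (ρ : ℝ) (hρ : 0 < ρ)
    (j : F →+* L) (hj : ∀ a : F, ‖j a‖ = ‖a‖)
    (jΩ : F →+* Ω) (hjΩ : ∀ a : F, ‖jΩ a‖ = ‖a‖)
    (s : L) (hs : s ≠ 0)
    -- Gauss norm property: for every Laurent polynomial `∑ c_i s^i`,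
    -- `‖∑ c_i s^i‖ = max_i ‖c_i‖ ρ^i`
    (hGauss : ∀ c : ℤ →₀ F,
      ‖∑ i ∈ c.support, j (c i) * s ^ i‖₊ =
        c.support.sup fun i => ‖c i‖₊ * (Real.toNNReal ρ) ^ i)
    -- `L` is the completion of `F(s)`: the subfield generated by `j(F)` and `s` is dense
    (hdense : Dense (Subfield.closure (Set.range j ∪ {s}) : Set L)) :
    -- `F⟨ρ/s⟩` : closure of polynomials in `s⁻¹`
    {x : L | ∀ ε : ℝ, 0 < ε → ∃ c : ℤ →₀ F, (∀ i ∈ c.support, i ≤ 0) ∧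
        ‖x - ∑ i ∈ c.support, j (c i) * s ^ i‖ ≤ ε} ∩
    -- `F[[s/ρ]]_an` : closure of rational functions with no poles in `|s| < ρ`
    {x : L | ∀ ε : ℝ, 0 < ε → ∃ P Q : Polynomial F, Q ≠ 0 ∧
        (∀ z : Ω, Polynomial.eval₂ jΩ z Q = 0 → ρ ≤ ‖z‖) ∧
        ‖x - Polynomial.eval₂ j s P / Polynomial.eval₂ j s Q‖ ≤ ε} =
    Set.range j :=
  stmt2_general ρ hρ j hj jΩ hjΩ s hs hGauss
end

section
/- Let R be a ring in which every finite module admits a finite free resolution and in which every unimodular tuple (f₁,…,f_r) is equivalent to (1,0,…,0) via a matrix in GL_r(R). Then every finite projective R-module is free. -/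
/-!
A projective module with a finite free resolution is stably free: for a surjection
`π : R^k → M` onto a projective module, `R^k ≃ ker π × M` and `ker π` is again projective with a
shorter resolution, so by induction `M × R^n ≃ R^m`. A copy of `R` is then cancelled at a time:
if `e : Q × R ≃ R^(k+1)`, the vector `e (0, 1)` is unimodular because `snd ∘ e⁻¹` sends it to `1`;
an invertible matrix moves it to `(1, 0, …, 0)`, giving `Q × R ≃ R × R^k` that matches the two
`R`-summands, and passing to the quotients by them yields `Q ≃ R^k`.
-/

universe u

/-- `HasFFRLength R s M` : the `R`-module `M` admits a finite free resolution of
length at most `s`: either `M` is finite free, or there is a surjection from a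
finite free module whose kernel admits a resolution of smaller length. -/
def HasFFRLength (R : Type u) [CommRing R] :
    (s : ℕ) → (M : Type u) → [AddCommGroup M] → [Module R M] → Prop
  | 0, M, _, _ => Module.Free R M ∧ Module.Finite R M
  | (s + 1), M, _, _ => (Module.Free R M ∧ Module.Finite R M) ∨
      ∃ (k : ℕ) (π : ((Fin k → R) →ₗ[R] M)), Function.Surjective π ∧
        HasFFRLength R s (LinearMap.ker π)

/-- the `R`-module `M` admits a finite free resolution. -/
def HasFiniteFreeResolution (R : Type u) [CommRing R]
    (M : Type u) [AddCommGroup M] [Module R M] : Prop :=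
  ∃ s : ℕ, HasFFRLength R s M

open LinearMap

def HasUnimodularColumnExtension (R : Type*) [CommRing R] : Prop :=
  ∀ (r : ℕ) (f : Fin r → R), Ideal.span (Set.range f) = ⊤ →
    ∃ M : GL (Fin r) R, (M : Matrix (Fin r) (Fin r) R).mulVec f =
      fun i : Fin r => if (i : ℕ) = 0 then (1 : R) else (0 : R)

section

variable {R : Type*} [CommRing R]

theorem Ideal.span_range_eq_top_of_apply_eq_one {ι : Type*} [Fintype ι]
    (φ : (ι → R) →ₗ[R] R) {v : ι → R} (hv : φ v = 1) : Ideal.span (Set.range v) = ⊤ := by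
  classical
  rw [Ideal.eq_top_iff_one, ← hv, φ.pi_apply_eq_sum_univ v]
  exact Ideal.sum_mem _ fun i _ => Ideal.mul_mem_right _ _ (Ideal.subset_span ⟨i, rfl⟩)

variable {M₁ M₂ N₁ N₂ : Type*} [AddCommGroup M₁] [Module R M₁] [AddCommGroup M₂] [Module R M₂]
  [AddCommGroup N₁] [Module R N₁] [AddCommGroup N₂] [Module R N₂]

noncomputable def LinearEquiv.prodCancel (e : (M₁ × M₂) ≃ₗ[R] (N₁ × N₂))
    (he : (range (inr R M₁ M₂)).map (e : M₁ × M₂ →ₗ[R] N₁ × N₂) = range (inl R N₁ N₂)) :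
    M₁ ≃ₗ[R] N₂ :=
  (quotKerEquivOfSurjective (fst R M₁ M₂) fst_surjective).symm ≪≫ₗ
    Submodule.Quotient.equiv _ _ e (by rw [ker_fst, ker_snd, he]) ≪≫ₗ
    quotKerEquivOfSurjective (snd R N₁ N₂) snd_surjective

theorem nonempty_linearEquiv_prod_ker_of_surjective [Module.Projective R M₂]
    (π : M₁ →ₗ[R] M₂) (hπ : Function.Surjective π) :
    Nonempty (M₁ ≃ₗ[R] (ker π × M₂)) := by
  obtain ⟨σ, hσ⟩ := Module.projective_lifting_property π LinearMap.id hπ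
  exact ⟨((exact_subtype_ker_map π).splitSurjectiveEquiv (ker π).injective_subtype ⟨σ, hσ⟩).1⟩

end

namespace HasUnimodularColumnExtension

variable {R : Type*} [CommRing R] {Q : Type*} [AddCommGroup Q] [Module R Q]

theorem nonempty_linearEquiv_of_prod_equiv (hR : HasUnimodularColumnExtension R) {k : ℕ}
    (e : (Q × R) ≃ₗ[R] (Fin (k + 1) → R)) : Nonempty (Q ≃ₗ[R] (Fin k → R)) := by
  have hspan : Ideal.span (Set.range (e (0, 1))) = ⊤ :=
    Ideal.span_range_eq_top_of_apply_eq_one (snd R Q R ∘ₗ e.symm.toLinearMap) (by simp)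
  obtain ⟨A, hA⟩ := hR _ _ hspan
  let g : (Q × R) ≃ₗ[R] (R × (Fin k → R)) :=
    e ≪≫ₗ (Matrix.GeneralLinearGroup.toLin A).toLinearEquiv ≪≫ₗ
      (Fin.consLinearEquiv R fun _ => R).symm
  have hg : (g : Q × R →ₗ[R] R × (Fin k → R)) ∘ₗ inr R Q R = inl R R (Fin k → R) := by
    refine LinearMap.ext_ring (Prod.ext ?_ (funext fun i => ?_))
    all_goals simp [g, hA, Fin.tail]
  exact ⟨g.prodCancel (by rw [← range_comp, hg])⟩

theorem free_of_prod_pi_equiv_pi (hR : HasUnimodularColumnExtension R) {n m : ℕ}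
    (e : (Q × (Fin n → R)) ≃ₗ[R] (Fin m → R)) : Module.Free R Q := by
  induction n generalizing m with
  | zero => exact .of_equiv (e.symm ≪≫ₗ LinearEquiv.prodUnique)
  | succ n ih =>
    cases m with
    | zero =>
      have : Subsingleton Q :=
        (e.injective.comp (inl_injective (R := R) (M₂ := Fin (n + 1) → R))).subsingleton
      exact .of_subsingleton R Q
    | succ k =>
      let e' : ((Q × (Fin n → R)) × R) ≃ₗ[R] (Fin (k + 1) → R) :=
        LinearEquiv.prodAssoc R Q _ R ≪≫ₗ
          (LinearEquiv.refl R Q).prodCongr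
            (LinearEquiv.prodComm R _ R ≪≫ₗ Fin.consLinearEquiv R fun _ => R) ≪≫ₗ e
      obtain ⟨eQ⟩ := hR.nonempty_linearEquiv_of_prod_equiv e'
      exact ih eQ

end HasUnimodularColumnExtension

theorem Module.Free.exists_linearEquiv_pi_fin (R M : Type*) [CommRing R] [AddCommGroup M]
    [Module R M] [Module.Free R M] [Module.Finite R M] : ∃ m, Nonempty (M ≃ₗ[R] (Fin m → R)) :=
  ⟨_, ⟨((Module.Free.chooseBasis R M).reindex (Fintype.equivFin _)).equivFun⟩⟩

theorem HasFFRLength.exists_prod_pi_equiv_pi {R : Type u} [CommRing R] :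
    ∀ {s : ℕ} {M : Type u} [AddCommGroup M] [Module R M] [Module.Projective R M],
      HasFFRLength R s M → ∃ n m, Nonempty ((M × (Fin n → R)) ≃ₗ[R] (Fin m → R))
  | 0, M, _, _, _, ⟨_, _⟩ | _ + 1, M, _, _, _, .inl ⟨_, _⟩ => by
    obtain ⟨m, ⟨e⟩⟩ := Module.Free.exists_linearEquiv_pi_fin R M
    exact ⟨0, m, ⟨LinearEquiv.prodUnique ≪≫ₗ e⟩⟩
  | s + 1, M, _, _, _, .inr ⟨k, π, hπ, hker⟩ => by
    obtain ⟨eF⟩ := nonempty_linearEquiv_prod_ker_of_surjective π hπ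
    have : Module.Projective R (ker π × M) := .of_equiv eF
    have : Module.Projective R (ker π) :=
      .of_split (inl R _ M) (fst R _ M) (LinearMap.ext fun _ => rfl)
    obtain ⟨n, m, ⟨eK⟩⟩ := hker.exists_prod_pi_equiv_pi
    refine ⟨m, k + n, ⟨?_⟩⟩
    exact (LinearEquiv.refl R M).prodCongr eK.symm ≪≫ₗ
      (LinearEquiv.prodAssoc R M _ _).symm ≪≫ₗ
      (LinearEquiv.prodComm R M _ ≪≫ₗ eF.symm).prodCongr (LinearEquiv.refl R _) ≪≫ₗ
      (LinearEquiv.sumArrowLequivProdArrow _ _ R R).symm ≪≫ₗ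
      LinearEquiv.funCongrLeft R R finSumFinEquiv.symm

/-- let `R` be a commutative ring in which every finite module admits a
finite free resolution, and in which every unimodular tuple `(f₁, …, f_r)` (one
generating the unit ideal) is equivalent to `(1, 0, …, 0)` via a matrix in `GL_r(R)`.
Then every finite projective `R`-module is free. -/
theorem stmt6 (R : Type u) [CommRing R]
    (hFFR : ∀ (M : Type u) [AddCommGroup M] [Module R M], Module.Finite R M →
      HasFiniteFreeResolution R M)
    (hUnimod : ∀ (r : ℕ) (f : Fin r → R), Ideal.span (Set.range f) = ⊤ →
      ∃ M : GL (Fin r) R, (M : Matrix (Fin r) (Fin r) R).mulVec f = fun i : Fin r => if (i : ℕ) = 0 then (1 : R) else (0 : R))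
    (P : Type u) [AddCommGroup P] [Module R P]
    [Module.Finite R P] (hproj : Module.Projective R P) :
    Module.Free R P := by
  obtain ⟨s, hs⟩ := hFFR P ‹_›
  obtain ⟨n, m, ⟨e⟩⟩ := hs.exists_prod_pi_equiv_pi
  exact HasUnimodularColumnExtension.free_of_prod_pi_equiv_pi hUnimod e
end

section
/- Let A be a finite multisubset of ℤ_p^n with a Liouville partition A = 𝒜₁ ∪ ⋯ ∪ 𝒜_k in the r-th direction. If B₁,…,B_k are multisubsets of ℤ_p^n such that the r-th coordinate multiset B_j^r is weakly equivalent to 𝒜_j^r for each j, then B₁,…,B_k form a Liouville partition in the r-th direction of B = ⋃_j B_j. -/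
/-- `⟨a⟩ₕ = min { n ∈ ℤ_{>0} : a + n ∈ p^h ℤ_p or a - n ∈ p^h ℤ_p }`. -/
noncomputable def padicBracket (p : ℕ) [Fact p.Prime] (a : ℤ_[p]) (h : ℕ) : ℕ :=
  sInf {n : ℕ | 0 < n ∧ ((p : ℤ_[p]) ^ h ∣ a + (n : ℤ_[p]) ∨ (p : ℤ_[p]) ^ h ∣ a - (n : ℤ_[p]))}

/-- `a` is a p-adic Liouville number: `a ∉ ℤ` and `liminf ⟨a⟩ₘ/m < ∞`,
i.e. some constant `C` satisfies `⟨a⟩ₘ ≤ C·m` for infinitely many `m`. -/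
def IsPadicLiouville (p : ℕ) [Fact p.Prime] (a : ℤ_[p]) : Prop :=
  (¬ ∃ z : ℤ, (z : ℤ_[p]) = a) ∧
    ∃ C : ℝ, ∀ m₀ : ℕ, ∃ m : ℕ, m₀ ≤ m ∧ 0 < m ∧ (padicBracket p a m : ℝ) ≤ C * m

/-- Weak equivalence of two families `a b : Fin s → ℤ_p` (multisubsets of `ℤ_p`). -/
def WeakEquiv1 (p : ℕ) [Fact p.Prime] {s : ℕ} (a b : Fin s → ℤ_[p]) : Prop :=
  ∃ c : ℝ, 0 < c ∧ ∃ σ : ℕ → Equiv.Perm (Fin s),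
    ∀ h : ℕ, 0 < h → ∀ j : Fin s, (padicBracket p (a (σ h j) - b j) h : ℝ) ≤ c * h

/-- The families `𝒜 j : Fin (m j) → ℤ_p^n` (`j = 1,…,k`) form a Liouville partition
(of their multiset union) in the `r`-th direction: for `l < m` and `a ∈ 𝒜_l`,
`b ∈ 𝒜_m`, the difference of `r`-th coordinates is p-adic non-Liouville and
not an integer. -/
def IsLiouvillePartitionDir (p : ℕ) [Fact p.Prime] {n k : ℕ} {m : Fin k → ℕ}
    (𝒜 : (j : Fin k) → Fin (m j) → (Fin n → ℤ_[p])) (r : Fin n) : Prop :=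
  ∀ l mm : Fin k, l < mm → ∀ (a : Fin (m l)) (b : Fin (m mm)),
    ¬ IsPadicLiouville p (𝒜 l a r - 𝒜 mm b r) ∧
      ¬ ∃ z : ℤ, (z : ℤ_[p]) = 𝒜 l a r - 𝒜 mm b r

/-!
Say that `x ∈ ℤ_p` is linearly approximable by integers if, for some `C` and infinitely many `h`,
`x` is congruent modulo `p^h` to an integer of absolute value at most `C h`. This holds exactly
when `x` is an integer or a Liouville number. The condition passes from `a - b` to `a' - b'`
whenever `a ≡ a'` and `b ≡ b'` modulo `p^h` up to integers of size `O(h)`, and weak equivalence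
provides such `a'`, `b'` for every `h`; since the multisets are finite, one pair `(a', b')` serves
for infinitely many `h`.
-/

open Filter

variable {p : ℕ} [Fact p.Prime]

lemma padicBracket_spec (x : ℤ_[p]) (h : ℕ) :
    0 < padicBracket p x h ∧
      ((p : ℤ_[p]) ^ h ∣ x + (padicBracket p x h : ℤ_[p]) ∨
        (p : ℤ_[p]) ^ h ∣ x - (padicBracket p x h : ℤ_[p])) := by
  -- `appr` may vanish; adding `p ^ h` keeps the witness positive.
  refine Nat.sInf_mem (s := {n : ℕ | 0 < n ∧ _}) ⟨x.appr h + p ^ h,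
    Nat.add_pos_right _ (pow_pos (Fact.out : p.Prime).pos h), Or.inr ?_⟩
  have happr := Ideal.mem_span_singleton.mp (PadicInt.appr_spec h x)
  simpa [sub_add_eq_sub_sub] using happr.sub (dvd_refl ((p : ℤ_[p]) ^ h))

lemma padicBracket_le {x : ℤ_[p]} {h n : ℕ} (hn : 0 < n)
    (hd : (p : ℤ_[p]) ^ h ∣ x + (n : ℤ_[p]) ∨ (p : ℤ_[p]) ^ h ∣ x - (n : ℤ_[p])) :
    padicBracket p x h ≤ n :=
  Nat.sInf_le ⟨hn, hd⟩

lemma eq_zero_of_frequently_pow_dvd {x : ℤ_[p]} (hx : ∃ᶠ h in atTop, (p : ℤ_[p]) ^ h ∣ x) :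
    x = 0 := by
  by_contra hx0
  obtain ⟨h, hh, hdvd⟩ := frequently_atTop.mp hx (x.valuation + 1)
  have hle := (PadicInt.mem_span_pow_iff_le_valuation x hx0 h).mp (Ideal.mem_span_singleton.mpr hdvd)
  omega

def IsIntApprox (p : ℕ) [Fact p.Prime] (x : ℤ_[p]) (h : ℕ) (K : ℝ) : Prop :=
  ∃ z : ℤ, |(z : ℝ)| ≤ K ∧ (p : ℤ_[p]) ^ h ∣ x - z

namespace IsIntApprox

variable {x y : ℤ_[p]} {h : ℕ} {K L : ℝ}

lemma mono (hx : IsIntApprox p x h K) (hKL : K ≤ L) : IsIntApprox p x h L :=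
  let ⟨z, hz, hdvd⟩ := hx
  ⟨z, hz.trans hKL, hdvd⟩

lemma add (hx : IsIntApprox p x h K) (hy : IsIntApprox p y h L) :
    IsIntApprox p (x + y) h (K + L) := by
  obtain ⟨z, hz, hxz⟩ := hx
  obtain ⟨w, hw, hyw⟩ := hy
  refine ⟨z + w, ?_, ?_⟩
  · push_cast
    exact (abs_add_le _ _).trans (add_le_add hz hw)
  · convert hxz.add hyw using 1
    push_cast
    ring

lemma sub (hx : IsIntApprox p x h K) (hy : IsIntApprox p y h L) :
    IsIntApprox p (x - y) h (K + L) := by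
  obtain ⟨w, hw, hyw⟩ := hy
  rw [sub_eq_add_neg]
  refine hx.add ⟨-w, by simpa using hw, ?_⟩
  convert hyw.neg_right using 1
  push_cast
  ring

lemma of_padicBracket_le (hx : (padicBracket p x h : ℝ) ≤ K) : IsIntApprox p x h K := by
  obtain ⟨-, hplus | hminus⟩ := padicBracket_spec x h
  · exact ⟨-(padicBracket p x h : ℤ), by simpa using hx, by simpa using hplus⟩
  · exact ⟨padicBracket p x h, by simpa using hx, by simpa using hminus⟩

lemma padicBracket_le (hx : IsIntApprox p x h K) (hndvd : ¬ (p : ℤ_[p]) ^ h ∣ x) :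
    (padicBracket p x h : ℝ) ≤ K := by
  obtain ⟨z, hz, hxz⟩ := hx
  have hz0 : z ≠ 0 := by
    rintro rfl
    exact hndvd (by simpa using hxz)
  have hbound : padicBracket p x h ≤ z.natAbs := by
    refine _root_.padicBracket_le (Int.natAbs_pos.mpr hz0) ?_
    rcases Int.natAbs_eq z with hpos | hneg
    · exact Or.inr (by rwa [hpos, Int.cast_natCast] at hxz)
    · exact Or.inl (by rwa [hneg, Int.cast_neg, Int.cast_natCast, sub_neg_eq_add] at hxz)
  calc (padicBracket p x h : ℝ) ≤ z.natAbs := by exact_mod_cast hbound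
    _ = |(z : ℝ)| := by rw [Nat.cast_natAbs, Int.cast_abs]
    _ ≤ K := hz

end IsIntApprox

def IsLinearlyIntApprox (p : ℕ) [Fact p.Prime] (x : ℤ_[p]) : Prop :=
  ∃ C : ℝ, ∃ᶠ h in atTop, IsIntApprox p x h (C * h)

namespace IsLinearlyIntApprox

lemma intCast (z : ℤ) : IsLinearlyIntApprox p (z : ℤ_[p]) := by
  refine ⟨|(z : ℝ)|, (eventually_gt_atTop 0).frequently.mono fun h hh => ⟨z, ?_, by simp⟩⟩
  have : (1 : ℝ) ≤ h := by exact_mod_cast hh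
  nlinarith [abs_nonneg (z : ℝ)]

lemma of_isPadicLiouville {x : ℤ_[p]} (hx : IsPadicLiouville p x) : IsLinearlyIntApprox p x := by
  obtain ⟨-, C, hC⟩ := hx
  refine ⟨C, frequently_atTop.mpr fun h₀ => ?_⟩
  obtain ⟨h, hh, -, hbound⟩ := hC h₀
  exact ⟨h, hh, .of_padicBracket_le hbound⟩

lemma int_or_isPadicLiouville {x : ℤ_[p]} (hx : IsLinearlyIntApprox p x) :
    (∃ z : ℤ, (z : ℤ_[p]) = x) ∨ IsPadicLiouville p x := by
  by_cases hint : ∃ z : ℤ, (z : ℤ_[p]) = x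
  · exact .inl hint
  have hx0 : x ≠ 0 := fun hx0 => hint ⟨0, by simp [hx0]⟩
  have hndvd : ∀ᶠ h in atTop, ¬ (p : ℤ_[p]) ^ h ∣ x :=
    not_frequently.mp fun hdvd => hx0 (eq_zero_of_frequently_pow_dvd hdvd)
  obtain ⟨C, hC⟩ := hx
  refine .inr ⟨hint, C, fun h₀ => ?_⟩
  obtain ⟨h, hh, happrox, hndvd, hpos⟩ :=
    frequently_atTop.mp (hC.and_eventually (hndvd.and (eventually_gt_atTop 0))) h₀
  exact ⟨h, hh, hpos, happrox.padicBracket_le hndvd⟩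

end IsLinearlyIntApprox

lemma WeakEquiv1.eventually_exists_isIntApprox {s : ℕ} {a b : Fin s → ℤ_[p]}
    (hab : WeakEquiv1 p a b) :
    ∃ c : ℝ, ∀ i, ∀ᶠ h in atTop, ∃ j, IsIntApprox p (a i - b j) h (c * h) := by
  obtain ⟨c, -, σ, hσ⟩ := hab
  refine ⟨c, fun i => (eventually_gt_atTop 0).mono fun h hh => ⟨(σ h).symm i, ?_⟩⟩
  simpa using IsIntApprox.of_padicBracket_le (hσ h hh ((σ h).symm i))

lemma IsLinearlyIntApprox.exists_of_weakEquiv1 {s t : ℕ} {a a' : Fin s → ℤ_[p]}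
    {b b' : Fin t → ℤ_[p]} (ha : WeakEquiv1 p a a') (hb : WeakEquiv1 p b b') {i : Fin s}
    {j : Fin t} (hab : IsLinearlyIntApprox p (a i - b j)) :
    ∃ i' j', IsLinearlyIntApprox p (a' i' - b' j') := by
  obtain ⟨C, hC⟩ := hab
  obtain ⟨c, hc⟩ := ha.eventually_exists_isIntApprox
  obtain ⟨d, hd⟩ := hb.eventually_exists_isIntApprox
  have hpair : ∃ᶠ h in atTop, ∃ i' j', IsIntApprox p (a' i' - b' j') h ((C + c + d) * h) := by
    refine (hC.and_eventually ((hc i).and (hd j))).mono ?_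
    rintro h ⟨happrox, ⟨i', hi'⟩, ⟨j', hj'⟩⟩
    refine ⟨i', j', ?_⟩
    have hsplit : a' i' - b' j' = (a i - b j) - (a i - a' i') + (b j - b' j') := by ring
    rw [hsplit, add_mul, add_mul]
    exact (happrox.sub hi').add hj'
  obtain ⟨i', j', hfreq⟩ := (frequently_exists.mp hpair).imp fun _ => frequently_exists.mp
  exact ⟨i', j', C + c + d, hfreq⟩

/-- if `𝒜₁, …, 𝒜_k` is a Liouville partition of `A` in the `r`-th
direction and each `B_j` has `r`-th coordinate multiset weakly equivalent to that
of `𝒜_j`, then `B₁, …, B_k` form a Liouville partition of `⋃ B_j` in the `r`-th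
direction. -/
theorem stmt9 (p : ℕ) [Fact p.Prime] {n k : ℕ} {m : Fin k → ℕ}
    (𝒜 B : (j : Fin k) → Fin (m j) → (Fin n → ℤ_[p])) (r : Fin n)
    (hA : IsLiouvillePartitionDir p 𝒜 r)
    (hW : ∀ j : Fin k, WeakEquiv1 p (fun t => B j t r) (fun t => 𝒜 j t r)) :
    IsLiouvillePartitionDir p B r := by
  intro l l' hll' a b
  have hB : ¬ IsLinearlyIntApprox p (B l a r - B l' b r) := fun hB => by
    obtain ⟨i, j, hij⟩ := IsLinearlyIntApprox.exists_of_weakEquiv1 (hW l) (hW l') hB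
    rcases hij.int_or_isPadicLiouville with hint | hliouville
    · exact (hA l l' hll' i j).2 hint
    · exact (hA l l' hll' i j).1 hliouville
  refine ⟨fun hliouville => hB (.of_isPadicLiouville hliouville), ?_⟩
  rintro ⟨z, hz⟩
  exact hB (hz ▸ .intCast z)
end

section
/- The map ι: ℤ_p/ℤ → ℰ/(𝒩 ∩ ℰ), sending α to the class of an approximation sequence {p^{-h}α_h}_{h≥0} (where α_h ∈ ℤ, α_h ≡ α mod p^h), is a well-defined group isomorphism, where ℰ = { (a_h) ∈ ℝ^{ℤ_{≥0}} : p^h⟨p·a_{h+1} − a_h⟩ = O(1) } and 𝒩 = { (a_h) : p^h⟨a_h⟩ = O(h) }, with ⟨x⟩ = dist(x, ℤ). -/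
/-!
If `p^h ∣ a_{h+1} - a_h` for an integer sequence `a`, then `x_h = a_h / p^h` has integral steps
`p x_{h+1} - x_h`, so `x ∈ ℰ`, and `a` is a system of approximations of some `α ∈ ℤ_p`
(the `a_h` are `p`-adically Cauchy). Differences of approximations of the same `α` are divisible
by `p^h`, which puts them in `𝒩 ∩ ℰ`; this gives well-definedness and additivity.

Injectivity: if `x ∈ 𝒩`, replacing `a_h` by its residue of least absolute value modulo `p^h`
gives approximations of `α` of size `p^h ⟨x_h⟩ = O(h)`. Their consecutive differences are
divisible by `p^h` but `O(h)`, so they eventually vanish and `α` is the integer they stabilise at.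

Surjectivity: for `e ∈ ℰ`, round each step `p e_{h+1} - e_h` to an integer `n_h` and put
`a_h = ⌊e_0⌉ + Σ_{j<h} p^j n_j`. Then `d = e - x` has steps `p d_{h+1} - d_h` of size
`⟨p e_{h+1} - e_h⟩ = O(p^{-h})`, and telescoping `p^{h+1} d_{h+1} - p^h d_h` gives `p^h |d_h| = O(h)`.
-/

/-- `⟨x⟩` : the distance from the real number `x` to the nearest integer. -/
noncomputable def distZ (x : ℝ) : ℝ := |x - round x|

/-- `𝒩` : sequences with `p^h ⟨a_h⟩ = O(h)`. -/
def NSet (p : ℕ) : Set (ℕ → ℝ) :=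
  {a | ∃ C : ℝ, ∀ h : ℕ, 0 < h → (p : ℝ) ^ h * distZ (a h) ≤ C * h}

/-- `ℰ` : well-ordered sequences, those with `p^h ⟨p·a_{h+1} − a_h⟩ = O(1)`. -/
def ESet (p : ℕ) : Set (ℕ → ℝ) :=
  {a | ∃ C : ℝ, ∀ h : ℕ, (p : ℝ) ^ h * distZ ((p : ℝ) * a (h + 1) - a h) ≤ C}

/-- `a : ℕ → ℤ` is a system of approximations of `α ∈ ℤ_p`: `a h ≡ α (mod p^h)`;
the associated approximation sequence is `h ↦ a h / p^h ∈ ℝ`. -/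
def IsApprox (p : ℕ) [Fact p.Prime] (α : ℤ_[p]) (a : ℕ → ℤ) : Prop :=
  ∀ h : ℕ, (p : ℤ_[p]) ^ h ∣ (α - (a h : ℤ_[p]))

noncomputable def apprSeq (p : ℕ) (a : ℕ → ℤ) : ℕ → ℝ :=
  fun h => (a h : ℝ) / (p : ℝ) ^ h

open Filter

section distZ

lemma distZ_intCast (n : ℤ) : distZ n = 0 := by
  simp [distZ]

lemma distZ_sub_intCast (x : ℝ) (n : ℤ) : distZ (x - n) = distZ x := by
  simp [distZ, round_sub_intCast]

lemma distZ_le_abs (x : ℝ) : distZ x ≤ |x| :=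
  (round_le x 0).trans_eq (by simp)

lemma distZ_add_le (x y : ℝ) : distZ (x + y) ≤ distZ x + distZ y :=
  calc distZ (x + y) ≤ |x + y - ((round x + round y : ℤ) : ℝ)| := round_le _ _
    _ = |(x - round x) + (y - round y)| := by push_cast; ring_nf
    _ ≤ distZ x + distZ y := abs_add_le _ _

end distZ

section Sequences

variable {p : ℕ} {a b : ℕ → ℝ}

lemma add_mem_NSet (ha : a ∈ NSet p) (hb : b ∈ NSet p) : a + b ∈ NSet p := by
  obtain ⟨C, hC⟩ := ha
  obtain ⟨D, hD⟩ := hb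
  refine ⟨C + D, fun h hh => ?_⟩
  calc (p : ℝ) ^ h * distZ ((a + b) h)
      ≤ (p : ℝ) ^ h * distZ (a h) + (p : ℝ) ^ h * distZ (b h) := by
        rw [← mul_add]; exact mul_le_mul_of_nonneg_left (distZ_add_le _ _) (by positivity)
    _ ≤ (C + D) * h := by linarith [hC h hh, hD h hh]

lemma add_mem_ESet (ha : a ∈ ESet p) (hb : b ∈ ESet p) : a + b ∈ ESet p := by
  obtain ⟨C, hC⟩ := ha
  obtain ⟨D, hD⟩ := hb
  refine ⟨C + D, fun h => ?_⟩
  have hsplit : (p : ℝ) * (a + b) (h + 1) - (a + b) h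
      = ((p : ℝ) * a (h + 1) - a h) + ((p : ℝ) * b (h + 1) - b h) := by
    simp only [Pi.add_apply]; ring
  calc (p : ℝ) ^ h * distZ ((p : ℝ) * (a + b) (h + 1) - (a + b) h)
      ≤ (p : ℝ) ^ h * distZ ((p : ℝ) * a (h + 1) - a h)
        + (p : ℝ) ^ h * distZ ((p : ℝ) * b (h + 1) - b h) := by
        rw [hsplit, ← mul_add]; exact mul_le_mul_of_nonneg_left (distZ_add_le _ _) (by positivity)
    _ ≤ C + D := add_le_add (hC h) (hD h)

lemma abs_pow_mul_le_of_abs_step_le {r C : ℝ} (hr : 0 ≤ r)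
    (hC : ∀ h, r ^ h * |r * a (h + 1) - a h| ≤ C) (h : ℕ) :
    |r ^ h * a h| ≤ |a 0| + C * h := by
  induction h with
  | zero => simp
  | succ h ih =>
    have htel : r ^ (h + 1) * a (h + 1) = r ^ h * (r * a (h + 1) - a h) + r ^ h * a h := by ring
    calc |r ^ (h + 1) * a (h + 1)| ≤ r ^ h * |r * a (h + 1) - a h| + |r ^ h * a h| := by
          rw [htel, ← abs_of_nonneg (pow_nonneg hr h), ← abs_mul, abs_of_nonneg (pow_nonneg hr h)]
          exact abs_add_le _ _
      _ ≤ |a 0| + C * ↑(h + 1) := by push_cast; linarith [hC h]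

lemma mem_NSet_of_abs_step_le {C : ℝ} (hC : ∀ h, (p : ℝ) ^ h * |p * a (h + 1) - a h| ≤ C) :
    a ∈ NSet p := by
  refine ⟨|a 0| + C, fun h hh => ?_⟩
  have hh' : (1 : ℝ) ≤ h := by exact_mod_cast hh
  have hC0 : 0 ≤ C := (mul_nonneg (by positivity) (abs_nonneg _)).trans (hC 0)
  calc (p : ℝ) ^ h * distZ (a h) ≤ |(p : ℝ) ^ h * a h| := by
        rw [abs_mul, abs_of_nonneg (by positivity)]
        exact mul_le_mul_of_nonneg_left (distZ_le_abs _) (by positivity)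
    _ ≤ |a 0| + C * h := abs_pow_mul_le_of_abs_step_le (by positivity) hC h
    _ ≤ (|a 0| + C) * h := by nlinarith [abs_nonneg (a 0)]

end Sequences

section apprSeq

variable {p : ℕ}

lemma apprSeq_add (a b : ℕ → ℤ) : apprSeq p (a + b) = apprSeq p a + apprSeq p b := by
  funext h; simp [apprSeq, add_div]

lemma apprSeq_sub (a b : ℕ → ℤ) : apprSeq p (a - b) = apprSeq p a - apprSeq p b := by
  funext h; simp [apprSeq, sub_div]

lemma pow_mul_apprSeq (hp : p ≠ 0) (a : ℕ → ℤ) (h : ℕ) : (p : ℝ) ^ h * apprSeq p a h = a h := by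
  simp [apprSeq, mul_div_cancel₀, hp]

lemma mul_apprSeq_succ_sub (hp : p ≠ 0) (a : ℕ → ℤ) (h : ℕ) :
    (p : ℝ) * apprSeq p a (h + 1) - apprSeq p a h = ((a (h + 1) - a h : ℤ) : ℝ) / (p : ℝ) ^ h := by
  simp only [apprSeq, pow_succ]
  field_simp
  push_cast
  ring

lemma apprSeq_mem_ESet_of_pow_dvd_succ_sub (hp : p ≠ 0) {a : ℕ → ℤ}
    (ha : ∀ h, (p : ℤ) ^ h ∣ a (h + 1) - a h) : apprSeq p a ∈ ESet p := by
  refine ⟨0, fun h => ?_⟩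
  obtain ⟨k, hk⟩ := ha h
  rw [mul_apprSeq_succ_sub hp, hk]
  simp [hp, distZ_intCast]

lemma apprSeq_mem_NSet_of_pow_dvd (hp : p ≠ 0) {a : ℕ → ℤ} (ha : ∀ h, (p : ℤ) ^ h ∣ a h) :
    apprSeq p a ∈ NSet p := by
  refine ⟨0, fun h _ => ?_⟩
  obtain ⟨k, hk⟩ := ha h
  simp [apprSeq, hk, hp, distZ_intCast]

lemma apprSeq_const_mem_NSet (hp : p ≠ 0) (z : ℤ) : apprSeq p (fun _ => z) ∈ NSet p := by
  refine ⟨|(z : ℝ)|, fun h hh => ?_⟩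
  calc (p : ℝ) ^ h * distZ (apprSeq p (fun _ => z) h)
      ≤ |(p : ℝ) ^ h * apprSeq p (fun _ => z) h| := by
        rw [abs_mul, abs_of_nonneg (by positivity)]
        exact mul_le_mul_of_nonneg_left (distZ_le_abs _) (by positivity)
    _ = |(z : ℝ)| * 1 := by rw [pow_mul_apprSeq hp, mul_one]
    _ ≤ |(z : ℝ)| * h := mul_le_mul_of_nonneg_left (by exact_mod_cast hh) (abs_nonneg _)

end apprSeq

lemma PadicInt.eq_zero_of_forall_pow_p_dvd {p : ℕ} [Fact p.Prime] {x : ℤ_[p]}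
    (hx : ∀ n, (p : ℤ_[p]) ^ n ∣ x) : x = 0 :=
  PadicInt.ext_of_toZModPow.1 fun n => by
    rw [map_zero, ← RingHom.mem_ker, PadicInt.ker_toZModPow]
    exact Ideal.mem_span_singleton.2 (hx n)

section IsApprox

variable {p : ℕ} [Fact p.Prime] {α β : ℤ_[p]} {a b : ℕ → ℤ}

lemma isApprox_zero_iff : IsApprox p 0 a ↔ ∀ h, (p : ℤ) ^ h ∣ a h := by
  simp only [IsApprox, zero_sub, dvd_neg, PadicInt.pow_p_dvd_int_iff]

lemma IsApprox.add (ha : IsApprox p α a) (hb : IsApprox p β b) : IsApprox p (α + β) (a + b) :=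
  fun h => by simpa [add_sub_add_comm] using dvd_add (ha h) (hb h)

lemma IsApprox.sub (ha : IsApprox p α a) (hb : IsApprox p β b) : IsApprox p (α - β) (a - b) :=
  fun h => by simpa [sub_sub_sub_comm] using dvd_sub (ha h) (hb h)

lemma isApprox_intCast_const (z : ℤ) : IsApprox p z fun _ => z := fun h => by simp

lemma IsApprox.pow_dvd_succ_sub (ha : IsApprox p α a) (h : ℕ) : (p : ℤ) ^ h ∣ a (h + 1) - a h := by
  have hshift : IsApprox p α fun h => a (h + 1) :=
    fun h => (pow_dvd_pow _ h.le_succ).trans (ha (h + 1))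
  exact isApprox_zero_iff.1 (by simpa using hshift.sub ha) h

lemma exists_isApprox_of_pow_dvd_succ_sub (ha : ∀ h, (p : ℤ) ^ h ∣ a (h + 1) - a h) :
    ∃ α : ℤ_[p], IsApprox p α a := by
  refine ⟨PadicInt.ofIntSeq _ (PadicInt.isCauSeq_padicNorm_of_pow_dvd_sub a p ha), fun n => ?_⟩
  rw [← Ideal.mem_span_singleton, ← PadicInt.ker_toZModPow, RingHom.mem_ker, map_sub,
    PadicInt.toZModPow_ofIntSeq_of_pow_dvd_sub _ _ ha, map_intCast, sub_self]

lemma IsApprox.eq_of_eventually_eq {z : ℤ} (ha : IsApprox p α a) (hz : ∀ᶠ h in atTop, a h = z) :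
    (z : ℤ_[p]) = α := by
  refine (sub_eq_zero.1 (PadicInt.eq_zero_of_forall_pow_p_dvd fun n => ?_)).symm
  obtain ⟨h, haz, hnh⟩ := (hz.and (eventually_ge_atTop n)).exists
  exact (pow_dvd_pow _ hnh).trans (haz ▸ ha h)

lemma IsApprox.apprSeq_mem_ESet (ha : IsApprox p α a) : apprSeq p a ∈ ESet p :=
  apprSeq_mem_ESet_of_pow_dvd_succ_sub (Fact.out : p.Prime).ne_zero ha.pow_dvd_succ_sub

lemma apprSeq_mem_NSet_inter_ESet_of_isApprox_zero (ha : IsApprox p 0 a) :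
    apprSeq p a ∈ NSet p ∩ ESet p :=
  ⟨apprSeq_mem_NSet_of_pow_dvd (Fact.out : p.Prime).ne_zero (isApprox_zero_iff.1 ha),
    ha.apprSeq_mem_ESet⟩

lemma IsApprox.apprSeq_mem_NSet_inter_ESet_of_intCast {z : ℤ} (ha : IsApprox p z a) :
    apprSeq p a ∈ NSet p ∩ ESet p := by
  have hdiff := apprSeq_mem_NSet_inter_ESet_of_isApprox_zero
    (by simpa using ha.sub (isApprox_intCast_const z))
  rw [← sub_add_cancel (apprSeq p a) (apprSeq p fun _ => z), ← apprSeq_sub]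
  exact ⟨add_mem_NSet hdiff.1 (apprSeq_const_mem_NSet (Fact.out : p.Prime).ne_zero z),
    add_mem_ESet hdiff.2 (isApprox_intCast_const z).apprSeq_mem_ESet⟩

end IsApprox

lemma eventually_mul_two_mul_add_one_lt_pow (C : ℝ) {r : ℝ} (hr : 1 < r) :
    ∀ᶠ h : ℕ in atTop, C * (2 * h + 1) < r ^ h := by
  have hlin : (fun h : ℕ => 2 * C * h + C) =o[atTop] fun h => r ^ h :=
    ((isLittleO_coe_const_pow_of_one_lt hr).const_mul_left (2 * C)).add
      (Asymptotics.isLittleO_const_left.2 <| Or.inr <|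
        (tendsto_pow_atTop_atTop_of_one_lt hr).congr fun h => by
          simp [abs_of_pos (zero_lt_one.trans hr)])
  filter_upwards [hlin.bound one_half_pos] with h hh
  have hpos : 0 < r ^ h := pow_pos (zero_lt_one.trans hr) h
  rw [Real.norm_of_nonneg hpos.le] at hh
  linarith [le_abs_self (2 * C * h + C), show ‖2 * C * h + C‖ = |2 * C * h + C| from rfl]

lemma exists_eventually_eq_of_pow_dvd_succ_sub {p : ℕ} (hp : 1 < p) {u : ℕ → ℤ}
    (hdvd : ∀ h, (p : ℤ) ^ h ∣ u (h + 1) - u h) {C : ℝ}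
    (hu : ∀ h, 0 < h → |(u h : ℝ)| ≤ C * h) : ∃ z, ∀ᶠ h in atTop, u h = z := by
  have hstep : ∀ᶠ h in atTop, u (h + 1) = u h := by
    filter_upwards [eventually_mul_two_mul_add_one_lt_pow C (Nat.one_lt_cast.2 hp),
      eventually_gt_atTop 0] with h hlt hpos
    refine sub_eq_zero.1 (Int.eq_zero_of_abs_lt_dvd (hdvd h) ?_)
    have hR : |(u (h + 1) : ℝ) - u h| < (p : ℝ) ^ h :=
      calc |(u (h + 1) : ℝ) - u h| ≤ |(u (h + 1) : ℝ)| + |(u h : ℝ)| := abs_sub _ _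
        _ ≤ C * ↑(h + 1) + C * h := add_le_add (hu _ h.succ_pos) (hu h hpos)
        _ = C * (2 * h + 1) := by push_cast; ring
        _ < (p : ℝ) ^ h := hlt
    exact_mod_cast hR
  obtain ⟨N, hN⟩ := eventually_atTop.1 hstep
  refine ⟨u N, eventually_atTop.2 ⟨N, fun h hh => ?_⟩⟩
  induction h, hh using Nat.le_induction with
  | base => rfl
  | succ h hNh ih => rw [hN h hNh, ih]

lemma IsApprox.exists_intCast_eq_of_apprSeq_mem_NSet {p : ℕ} [Fact p.Prime] {α : ℤ_[p]}
    {a : ℕ → ℤ} (ha : IsApprox p α a) (hN : apprSeq p a ∈ NSet p) : ∃ z : ℤ, (z : ℤ_[p]) = α := by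
  obtain ⟨C, hC⟩ := hN
  have hp := (Fact.out : p.Prime)
  set r : ℕ → ℤ := a - fun h => p ^ h * round (apprSeq p a h)
  have hr : IsApprox p α r := by
    simpa using ha.sub (isApprox_zero_iff.2 fun h => dvd_mul_right _ _)
  have hr_abs : ∀ h, |(r h : ℝ)| = (p : ℝ) ^ h * distZ (apprSeq p a h) := fun h => by
    have hrh : (r h : ℝ) = (p : ℝ) ^ h * (apprSeq p a h - round (apprSeq p a h)) := by
      rw [mul_sub, pow_mul_apprSeq hp.ne_zero]
      simp [r]
    rw [hrh, abs_mul, abs_of_nonneg (by positivity), distZ]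
  obtain ⟨z, hz⟩ := exists_eventually_eq_of_pow_dvd_succ_sub hp.one_lt hr.pow_dvd_succ_sub
    fun h hh => (hr_abs h).trans_le (hC h hh)
  exact ⟨z, hr.eq_of_eventually_eq hz⟩

lemma exists_isApprox_sub_apprSeq_mem_NSet_inter_ESet {p : ℕ} [Fact p.Prime] {e : ℕ → ℝ}
    (he : e ∈ ESet p) :
    ∃ (α : ℤ_[p]) (a : ℕ → ℤ), IsApprox p α a ∧ e - apprSeq p a ∈ NSet p ∩ ESet p := by
  obtain ⟨C, hC⟩ := he
  have hp := (Fact.out : p.Prime).ne_zero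
  set n : ℕ → ℤ := fun h => round ((p : ℝ) * e (h + 1) - e h)
  set a : ℕ → ℤ := fun h => round (e 0) + ∑ j ∈ Finset.range h, p ^ j * n j
  have ha_succ : ∀ h, a (h + 1) - a h = p ^ h * n h := fun h => by
    simp [a, Finset.sum_range_succ]
  obtain ⟨α, hα⟩ := exists_isApprox_of_pow_dvd_succ_sub (p := p) fun h => ⟨n h, ha_succ h⟩
  have hstep : ∀ h, (p : ℝ) * (e - apprSeq p a) (h + 1) - (e - apprSeq p a) h
      = ((p : ℝ) * e (h + 1) - e h) - n h := fun h => by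
    have happr := mul_apprSeq_succ_sub hp a h
    rw [ha_succ, Int.cast_mul, Int.cast_pow, Int.cast_natCast,
      mul_div_cancel_left₀ _ (pow_ne_zero _ (Nat.cast_ne_zero.2 hp))] at happr
    simp only [Pi.sub_apply]
    linarith
  refine ⟨α, a, hα, mem_NSet_of_abs_step_le (C := C) fun h => ?_, C, fun h => ?_⟩
  · rw [hstep]; exact hC h
  · rw [hstep, distZ_sub_intCast]; exact hC h
/-- Christol–Mebkhout, Théorème 4.2-3: the map
`ι : ℤ_p/ℤ → ℰ/(𝒩 ∩ ℰ)`, `α ↦ {p^{-h} α_h}`, is a well-defined group isomorphism.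
Unfolded at the level of sets and congruences this says:
(1) every approximation sequence lies in `ℰ`;
(2) two approximation sequences of the same `α` differ by an element of `𝒩 ∩ ℰ`
    (well-definedness);
(3) `ℤ` maps into `𝒩 ∩ ℰ` and, conversely, if an approximation sequence of `α`
    lies in `𝒩` then `α ∈ ℤ` (injectivity);
(4) `ι` is additive modulo `𝒩 ∩ ℰ` (group homomorphism);
(5) every element of `ℰ` is congruent modulo `𝒩 ∩ ℰ` to an approximation sequence
    (surjectivity). -/
theorem stmt17 (p : ℕ) [Fact p.Prime] :
    (∀ (α : ℤ_[p]) (a : ℕ → ℤ), IsApprox p α a → apprSeq p a ∈ ESet p) ∧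
    (∀ (α : ℤ_[p]) (a b : ℕ → ℤ), IsApprox p α a → IsApprox p α b →
      apprSeq p a - apprSeq p b ∈ NSet p ∩ ESet p) ∧
    (∀ (z : ℤ) (a : ℕ → ℤ), IsApprox p (z : ℤ_[p]) a →
      apprSeq p a ∈ NSet p ∩ ESet p) ∧
    (∀ (α : ℤ_[p]) (a : ℕ → ℤ), IsApprox p α a → apprSeq p a ∈ NSet p →
      ∃ z : ℤ, (z : ℤ_[p]) = α) ∧
    (∀ (α β : ℤ_[p]) (a b c : ℕ → ℤ), IsApprox p α a → IsApprox p β b →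
      IsApprox p (α + β) c →
      apprSeq p c - (apprSeq p a + apprSeq p b) ∈ NSet p ∩ ESet p) ∧
    (∀ e : ℕ → ℝ, e ∈ ESet p → ∃ (α : ℤ_[p]) (a : ℕ → ℤ), IsApprox p α a ∧
      e - apprSeq p a ∈ NSet p ∩ ESet p) :=
  ⟨fun _ _ ha => ha.apprSeq_mem_ESet,
    fun _ _ _ ha hb => by
      rw [← apprSeq_sub]
      exact apprSeq_mem_NSet_inter_ESet_of_isApprox_zero (by simpa using ha.sub hb),
    fun _ _ ha => ha.apprSeq_mem_NSet_inter_ESet_of_intCast,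
    fun _ _ ha hN => ha.exists_intCast_eq_of_apprSeq_mem_NSet hN,
    fun _ _ _ _ _ ha hb hc => by
      rw [← apprSeq_add, ← apprSeq_sub]
      exact apprSeq_mem_NSet_inter_ESet_of_isApprox_zero (by simpa using hc.sub (ha.add hb)),
    fun _ he => exists_isApprox_sub_apprSeq_mem_NSet_inter_ESet he⟩
end

section
/- Let R be a K-affinoid (or K-dagger) algebra, G = Gal(K̄/K) the absolute Galois group, and R̂ = R ⊗̂_K C where C is the completed algebraic closure of K. Then G acts continuously on R̂ coefficientwise with respect to a K-Schauder basis, and the fixed subring R̂^G equals R. -/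
/-!
Ax–Sen–Tate. Let `c ∈ C` be fixed by every isometric `K`-automorphism of `C` and approximate it
by an algebraic `a`; then every conjugate of `a` lies within `ε = ‖c - a‖` of `a`. If
`p ^ m < deg a ≤ p ^ (m + 1)`, the Taylor coefficients of the minimal polynomial `f` of `a` at `a`
are elementary symmetric functions of the differences `a' - a` of the roots, so the
`(deg a - p ^ m)`-th Hasse derivative of `f`, of degree `p ^ m` and with leading coefficient
`(deg a).choose (p ^ m)` of norm `≥ |p| ^ (m + 1)`, has a root `b` with
`‖a - b‖ ≤ |p| ^ (-(m + 1) / p ^ m) * ε`; the conjugates of `b` are again that close to `b`.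
Iterating down to degree one yields `b ∈ K` with `‖a - b‖ ≤ |p| ^ (-S) * ε` for
`S = ∑ (j + 1) / p ^ j < ∞`, so `c` lies in the closure of `K`, which is `K`.
Conjugate roots are exchanged by automorphisms of the algebraic closure of `K` in `C`; these
preserve the norm, which is the spectral norm, and so extend by continuity to isometries of `C`.

For `x ∈ W` fixed by the coefficientwise action, uniqueness of the expansion makes every
coefficient fixed, hence in `K`, and the series then already converges in the complete space `R`.
-/

open Polynomial IntermediateField

theorem norm_map_sub_self_le_of_norm_sub_le {E F : Type*} [NormedAddCommGroup E]
    [IsUltrametricDist E] [FunLike F E E] [AddMonoidHomClass F E E] {σ : F} (hσ : Isometry σ)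
    {a b : E} {r : ℝ} (hab : ‖a - b‖ ≤ r) (ha : ‖σ a - a‖ ≤ r) : ‖σ b - b‖ ≤ r := by
  have hσab : ‖σ (b - a)‖ ≤ r := by rwa [hσ.norm_map_of_map_zero (map_zero σ), norm_sub_rev]
  calc ‖σ b - b‖ = ‖σ (b - a) + (σ a - a) + (a - b)‖ := by rw [map_sub]; abel_nf
    _ ≤ r := (IsUltrametricDist.norm_add_le_max _ _).trans <| max_le
      ((IsUltrametricDist.norm_add_le_max _ _).trans (max_le hσab ha)) hab

section NatCast

variable {K : Type*} [NormedDivisionRing K] [IsUltrametricDist K] {p : ℕ}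

theorem norm_natCast_eq_one_of_not_dvd (hp : p.Prime) (hpK : ‖(p : K)‖ < 1) {m : ℕ}
    (hm : ¬ p ∣ m) : ‖(m : K)‖ = 1 := by
  refine le_antisymm (IsUltrametricDist.norm_natCast_le_one K m) (not_lt.mp fun hmK => ?_)
  obtain ⟨u, v, huv⟩ := Nat.isCoprime_iff_coprime.mpr ((hp.coprime_iff_not_dvd).mpr hm)
  have hlt : ‖((u * p + v * m : ℤ) : K)‖ < 1 := by
    push_cast
    refine (IsUltrametricDist.norm_add_le_max _ _).trans_lt (max_lt ?_ ?_) <;> rw [norm_mul]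
    · exact (mul_le_of_le_one_left (norm_nonneg _)
        (IsUltrametricDist.norm_intCast_le_one K u)).trans_lt hpK
    · exact (mul_le_of_le_one_left (norm_nonneg _)
        (IsUltrametricDist.norm_intCast_le_one K v)).trans_lt hmK
  simp [huv] at hlt

theorem norm_natCast_eq_pow_factorization (hp : p.Prime) (hpK : ‖(p : K)‖ < 1) {m : ℕ}
    (hm : m ≠ 0) : ‖(m : K)‖ = ‖(p : K)‖ ^ m.factorization p := by
  conv_lhs => rw [← Nat.ordProj_mul_ordCompl_eq_self m p]
  rw [Nat.cast_mul, norm_mul, Nat.cast_pow, norm_pow,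
    norm_natCast_eq_one_of_not_dvd hp hpK (Nat.not_dvd_ordCompl hp hm), mul_one]

theorem pow_log_le_norm_choose (hp : p.Prime) (hpK : ‖(p : K)‖ < 1) {n k : ℕ} (hk : k ≤ n) :
    ‖(p : K)‖ ^ Nat.log p n ≤ ‖(n.choose k : K)‖ := by
  rw [norm_natCast_eq_pow_factorization hp hpK (Nat.choose_pos hk).ne']
  exact pow_le_pow_of_le_one (norm_nonneg _) hpK.le Nat.factorization_choose_le_log

end NatCast

theorem le_rpow_neg_div_mul_of_pow_mul_pow_le {t u ε : ℝ} {k d : ℕ} (ht : 0 < t) (hu : 0 ≤ u)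
    (hε : 0 ≤ ε) (hd : d ≠ 0) (h : t ^ k * u ^ d ≤ ε ^ d) : u ≤ t ^ (-(k / d : ℝ)) * ε := by
  have hX : (t ^ (-(k / d : ℝ)) * ε) ^ d = (t ^ k)⁻¹ * ε ^ d := by
    rw [mul_pow, ← Real.rpow_mul_natCast ht.le, neg_mul, div_mul_cancel₀ _ (by exact_mod_cast hd),
      Real.rpow_neg ht.le, Real.rpow_natCast]
  refine (pow_le_pow_iff_left₀ hu (by positivity) hd).mp ?_
  rw [hX, inv_mul_eq_div, le_div_iff₀' (by positivity)]
  exact h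

-- `|p| ^ (-axExponent p ℓ)` is the approximation constant for elements of degree `≤ p ^ ℓ`.
noncomputable def axExponent (p ℓ : ℕ) : ℝ := ∑ j ∈ Finset.range ℓ, ((j : ℝ) + 1) / (p : ℝ) ^ j

theorem axExponent_succ (p ℓ : ℕ) :
    axExponent p (ℓ + 1) = axExponent p ℓ + ((ℓ : ℝ) + 1) / (p : ℝ) ^ ℓ :=
  Finset.sum_range_succ _ _

theorem axExponent_mono (p : ℕ) : Monotone (axExponent p) := fun _ _ h =>
  Finset.sum_le_sum_of_subset_of_nonneg (Finset.range_subset_range.mpr h) fun _ _ _ => by positivity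

theorem summable_axExponent_term {p : ℕ} (hp : 1 < p) :
    Summable fun j : ℕ => ((j : ℝ) + 1) / (p : ℝ) ^ j := by
  have hr : ‖(p : ℝ)⁻¹‖ < 1 := by
    rw [norm_inv, Real.norm_natCast]; exact inv_lt_one_of_one_lt₀ (by exact_mod_cast hp)
  refine ((summable_pow_mul_geometric_of_norm_lt_one 1 hr).add
    (summable_geometric_of_norm_lt_one hr)).congr fun j => ?_
  rw [inv_pow, div_eq_mul_inv]; ring

theorem axExponent_le_tsum {p : ℕ} (hp : 1 < p) (ℓ : ℕ) :
    axExponent p ℓ ≤ ∑' j : ℕ, ((j : ℝ) + 1) / (p : ℝ) ^ j :=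
  (summable_axExponent_term hp).sum_le_tsum _ fun _ _ => by positivity

section UltrametricPolynomial

variable {L : Type*} [NormedField L]

theorem norm_multiset_prod (t : Multiset L) : ‖t.prod‖ = (t.map (‖·‖)).prod :=
  map_multiset_prod normHom t

theorem exists_isRoot_norm_mul_norm_sub_pow_le [IsAlgClosed L] {G : L[X]} (hG : 0 < G.natDegree)
    (a : L) :
    ∃ r, G.IsRoot r ∧ ‖G.leadingCoeff‖ * ‖a - r‖ ^ G.natDegree ≤ ‖G.eval a‖ := by
  have hsplit := IsAlgClosed.splits G
  have hroots : G.roots ≠ 0 := by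
    intro h
    have := hsplit.natDegree_eq_card_roots
    simp [h] at this; omega
  obtain ⟨r, hr, hmin⟩ := Multiset.exists_min_image (fun r => ‖a - r‖) hroots
  refine ⟨r, isRoot_of_mem_roots hr, ?_⟩
  rw [hsplit.eval_eq_prod_roots, norm_mul, hsplit.natDegree_eq_card_roots, norm_multiset_prod,
    Multiset.map_map, ← Multiset.prod_replicate, ← Multiset.map_const']
  gcongr
  exact Multiset.prod_map_le_prod_map₀ _ _ (fun _ _ => norm_nonneg _) hmin

variable [IsUltrametricDist L]

theorem norm_esymm_le {s : Multiset L} {ε : ℝ} (hε : 0 ≤ ε) (hs : ∀ z ∈ s, ‖z‖ ≤ ε) (k : ℕ) :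
    ‖s.esymm k‖ ≤ ε ^ k := by
  obtain ⟨t, ht, hle⟩ :=
    IsUltrametricDist.exists_norm_multiset_sum_le (s.powersetCard k) (f := Multiset.prod)
  rcases eq_or_ne (s.powersetCard k) 0 with h0 | hne
  · simp [Multiset.esymm, h0, pow_nonneg hε]
  obtain ⟨hts, rfl⟩ := Multiset.mem_powersetCard.mp (ht hne)
  calc ‖(Multiset.map Multiset.prod (Multiset.powersetCard t.card s)).sum‖
      ≤ (t.map (‖·‖)).prod := norm_multiset_prod t ▸ hle
    _ ≤ (t.map fun _ => ε).prod := Multiset.prod_map_le_prod_map₀ _ _ (fun _ _ => norm_nonneg _)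
        fun z hz => hs z (Multiset.mem_of_le hts hz)
    _ = ε ^ t.card := by simp [Multiset.map_const']

theorem norm_hasseDeriv_eval_prod_X_sub_C_le {s : Multiset L} {a : L} {ε : ℝ} (hε : 0 ≤ ε)
    (hs : ∀ r ∈ s, ‖r - a‖ ≤ ε) {k : ℕ} (hk : k ≤ Multiset.card s) :
    ‖(hasseDeriv k (s.map fun r => X - C r).prod).eval a‖ ≤ ε ^ (Multiset.card s - k) := by
  have htaylor : taylor a (s.map fun r => X - C r).prod
      = ((s.map (· - a)).map fun r => X - C r).prod := by
    rw [← taylorAlgHom_apply, map_multiset_prod, Multiset.map_map, Multiset.map_map]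
    refine congrArg _ (Multiset.map_congr rfl fun r _ => ?_)
    simp only [Function.comp_apply, taylorAlgHom_apply, map_sub, taylor_X, taylor_C]
    ring
  rw [← taylor_coeff, htaylor, Multiset.prod_X_sub_C_coeff _ (by simpa using hk),
    Multiset.card_map, norm_mul, norm_pow, norm_neg, norm_one, one_pow, one_mul]
  refine norm_esymm_le hε (fun z hz => ?_) _
  obtain ⟨r, hr, rfl⟩ := Multiset.mem_map.mp hz
  exact hs r hr

end UltrametricPolynomial

section DegreeReduction

variable {K L : Type*} [NormedField K] [CharZero K] [NormedField L] [NormedAlgebra K L]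
  [IsAlgClosed L] [IsUltrametricDist L]

theorem exists_natDegree_minpoly_le_norm_choose_mul_le {a : L} (ha : IsIntegral K a) {d : ℕ}
    (hd : 0 < d) (hdn : d < (minpoly K a).natDegree) {ε : ℝ} (hε : 0 ≤ ε)
    (hconj : ∀ a' : L, aeval a' (minpoly K a) = 0 → ‖a' - a‖ ≤ ε) :
    ∃ b : L, IsIntegral K b ∧ (minpoly K b).natDegree ≤ d ∧
      ‖((minpoly K a).natDegree.choose d : K)‖ * ‖a - b‖ ^ d ≤ ε ^ d := by
  set n := (minpoly K a).natDegree
  set F := (minpoly K a).map (algebraMap K L)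
  set g := hasseDeriv (n - d) (minpoly K a)
  have hFsplit := IsAlgClosed.splits F
  have hcard : Multiset.card F.roots = n := by
    rw [← hFsplit.natDegree_eq_card_roots, natDegree_map]
  have hgd : g.natDegree = d := by rw [natDegree_hasseDeriv]; omega
  have hglc : g.leadingCoeff = n.choose d := by
    rw [leadingCoeff, hgd, hasseDeriv_coeff, Nat.add_sub_cancel' hdn.le,
      (minpoly.monic ha).coeff_natDegree, mul_one, Nat.choose_symm hdn.le]
  have hgF : g.map (algebraMap K L) = hasseDeriv (n - d) F := by
    ext k; simp [g, F, hasseDeriv_coeff]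
  have heval : ‖(g.map (algebraMap K L)).eval a‖ ≤ ε ^ d := by
    have := norm_hasseDeriv_eval_prod_X_sub_C_le hε (s := F.roots) (k := n - d)
      (fun r hr => hconj r (by rw [aeval_def, ← eval_map]; exact isRoot_of_mem_roots hr))
      (by omega)
    rwa [← hFsplit.eq_prod_roots_of_monic ((minpoly.monic ha).map _), hcard,
      Nat.sub_sub_self hdn.le, ← hgF] at this
  obtain ⟨b, hb, hab⟩ := exists_isRoot_norm_mul_norm_sub_pow_le
    (G := g.map (algebraMap K L)) (by rw [natDegree_map]; omega) a
  rw [natDegree_map, hgd, leadingCoeff_map, hglc, norm_algebraMap'] at hab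
  have hg0 : g ≠ 0 := fun h => by simp [h] at hgd; omega
  have hbg : aeval b g = 0 := by rwa [aeval_def, ← eval_map]
  refine ⟨b, (IsAlgebraic.isIntegral ⟨g, hg0, hbg⟩), ?_, hab.trans heval⟩
  exact hgd ▸ natDegree_le_of_dvd (minpoly.dvd K b hbg) hg0

end DegreeReduction

section Conjugates

variable {K C : Type*} [NontriviallyNormedField K] [CompleteSpace K] [IsUltrametricDist K]
  [NormedField C] [NormedAlgebra K C]

theorem norm_algEquiv_algebraicClosure_apply
    (τ : algebraicClosure K C ≃ₐ[K] algebraicClosure K C) (z : algebraicClosure K C) :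
    ‖(τ z : C)‖ = ‖(z : C)‖ := by
  change ‖τ z‖ = ‖z‖
  rw [NormedAlgebra.norm_eq_spectralNorm K, NormedAlgebra.norm_eq_spectralNorm K,
    ← spectralNorm_eq_of_equiv]

variable [CompleteSpace C]

theorem exists_continuous_algHom_extend
    (hdense : DenseRange ((↑) : algebraicClosure K C → C))
    (τ : algebraicClosure K C ≃ₐ[K] algebraicClosure K C) :
    ∃ φ : C →ₐ[K] C, Continuous φ ∧ ∀ z : algebraicClosure K C, φ z = τ z := by
  let ι := (algebraicClosure K C).val.toRingHom
  have hι : IsUniformInducing ι := isometry_subtype_coe.isUniformInducing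
  have hτ : UniformContinuous (ι.comp τ.toRingHom) :=
    (AddMonoidHomClass.isometry_of_norm (ι.comp τ.toRingHom)
      (norm_algEquiv_algebraicClosure_apply τ)).uniformContinuous
  have hφ := (hι.isDenseInducing hdense).extend_eq hτ.continuous
  refine ⟨⟨IsDenseInducing.extendRingHom hι hdense hτ, fun a => ?_⟩,
    (uniformContinuous_uniformly_extend hι hdense hτ).continuous, hφ⟩
  exact (hφ (algebraMap K _ a)).trans (by simp [ι])

theorem exists_isometry_algEquiv_extend
    (hdense : DenseRange ((↑) : algebraicClosure K C → C))
    (τ : algebraicClosure K C ≃ₐ[K] algebraicClosure K C) :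
    ∃ σ : C ≃ₐ[K] C, Isometry σ ∧ ∀ z : algebraicClosure K C, σ z = τ z := by
  obtain ⟨φ, hφc, hφ⟩ := exists_continuous_algHom_extend hdense τ
  obtain ⟨ψ, hψc, hψ⟩ := exists_continuous_algHom_extend hdense τ.symm
  have hφψ : φ.comp ψ = AlgHom.id K C := AlgHom.coe_fn_injective <|
    hdense.equalizer (hφc.comp hψc) continuous_id (funext fun z => by simp [hφ, hψ])
  have hψφ : ψ.comp φ = AlgHom.id K C := AlgHom.coe_fn_injective <|
    hdense.equalizer (hψc.comp hφc) continuous_id (funext fun z => by simp [hφ, hψ])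
  refine ⟨AlgEquiv.ofAlgHom φ ψ hφψ hψφ, AddMonoidHomClass.isometry_of_norm _ fun x => ?_, hφ⟩
  have := hdense.equalizer (continuous_norm.comp hφc) continuous_norm
    (funext fun z => by simp [hφ, norm_algEquiv_algebraicClosure_apply])
  exact congrFun this x

theorem exists_isometry_algEquiv_apply_eq [IsAlgClosed C]
    (hdense : DenseRange ((↑) : algebraicClosure K C → C)) {x y : C} (hx : IsIntegral K x)
    (hy : aeval y (minpoly K x) = 0) : ∃ σ : C ≃ₐ[K] C, Isometry σ ∧ σ x = y := by
  have hy' : IsIntegral K y := IsAlgebraic.isIntegral ⟨_, minpoly.ne_zero hx, hy⟩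
  let x' : algebraicClosure K C := ⟨x, mem_algebraicClosure_iff'.mpr hx⟩
  let y' : algebraicClosure K C := ⟨y, mem_algebraicClosure_iff'.mpr hy'⟩
  have hy'x' : aeval y' (minpoly K x') = 0 := by
    apply Subtype.val_injective
    rw [IntermediateField.minpoly_eq, ← IntermediateField.aeval_coe]
    exact hy
  obtain ⟨τ, hτ⟩ := minpoly.exists_algEquiv_of_root' (Algebra.IsAlgebraic.isAlgebraic x') hy'x'
  obtain ⟨σ, hσ, hστ⟩ := exists_isometry_algEquiv_extend hdense τ
  exact ⟨σ, hσ, (hστ x').trans (congrArg Subtype.val hτ)⟩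

end Conjugates

section AxSenTate

variable {K C : Type*} [NontriviallyNormedField K] [CompleteSpace K] [IsUltrametricDist K]
  [CharZero K] [NormedField C] [NormedAlgebra K C] [CompleteSpace C] [IsAlgClosed C] {p : ℕ}

theorem exists_approx_natDegree_le_pow (hp : p.Prime) (hpK : ‖(p : K)‖ < 1)
    (hdense : DenseRange ((↑) : algebraicClosure K C → C)) {a : C} (ha : IsIntegral K a)
    {m : ℕ} (hlo : p ^ m < (minpoly K a).natDegree) (hhi : (minpoly K a).natDegree ≤ p ^ (m + 1))
    {ε : ℝ} (hε : 0 ≤ ε) (haut : ∀ σ : C ≃ₐ[K] C, Isometry σ → ‖σ a - a‖ ≤ ε) :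
    ∃ b : C, IsIntegral K b ∧ (minpoly K b).natDegree ≤ p ^ m ∧
      ‖a - b‖ ≤ ‖(p : K)‖ ^ (-(((m : ℝ) + 1) / (p : ℝ) ^ m)) * ε := by
  have := IsUltrametricDist.of_normedAlgebra K (L := C)
  have hconj (a' : C) (h : aeval a' (minpoly K a) = 0) : ‖a' - a‖ ≤ ε := by
    obtain ⟨σ, hσ, rfl⟩ := exists_isometry_algEquiv_apply_eq hdense ha h
    exact haut σ hσ
  obtain ⟨b, hb, hbdeg, hab⟩ :=
    exists_natDegree_minpoly_le_norm_choose_mul_le ha (pow_pos hp.pos m) hlo hε hconj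
  have hlog : Nat.log p (minpoly K a).natDegree ≤ m + 1 :=
    (Nat.log_mono_right hhi).trans (Nat.log_pow hp.one_lt _).le
  have hchoose : ‖(p : K)‖ ^ (m + 1) ≤ ‖((minpoly K a).natDegree.choose (p ^ m) : K)‖ :=
    (pow_le_pow_of_le_one (norm_nonneg _) hpK.le hlog).trans (pow_log_le_norm_choose hp hpK hlo.le)
  refine ⟨b, hb, hbdeg, ?_⟩
  have := le_rpow_neg_div_mul_of_pow_mul_pow_le (norm_pos_iff.mpr (mod_cast hp.ne_zero))
    (norm_nonneg _) hε (pow_ne_zero m hp.ne_zero)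
    ((mul_le_mul_of_nonneg_right hchoose (by positivity)).trans hab)
  exact_mod_cast this

theorem exists_norm_sub_algebraMap_le (hp : p.Prime) (hpK : ‖(p : K)‖ < 1)
    (hdense : DenseRange ((↑) : algebraicClosure K C → C)) (ℓ : ℕ) :
    ∀ a : C, IsIntegral K a → (minpoly K a).natDegree ≤ p ^ ℓ →
    ∀ ε : ℝ, 0 ≤ ε → (∀ σ : C ≃ₐ[K] C, Isometry σ → ‖σ a - a‖ ≤ ε) →
    ∃ b : K, ‖a - algebraMap K C b‖ ≤ ‖(p : K)‖ ^ (-axExponent p ℓ) * ε := by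
  have := IsUltrametricDist.of_normedAlgebra K (L := C)
  have ht : 0 < ‖(p : K)‖ := norm_pos_iff.mpr (mod_cast hp.ne_zero)
  induction ℓ using Nat.strong_induction_on with | _ ℓ ih => ?_
  intro a ha hdeg ε hε haut
  set n := (minpoly K a).natDegree
  obtain hn | hn := eq_or_lt_of_le (Nat.one_le_iff_ne_zero.mpr (minpoly.natDegree_pos ha).ne')
  · obtain ⟨b, hb⟩ := minpoly.natDegree_eq_one_iff.mp hn.symm
    exact ⟨b, by rw [hb, sub_self, norm_zero]; positivity⟩
  set m := Nat.log p (n - 1)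
  have hlo : p ^ m < n := (Nat.pow_log_le_self p (by omega)).trans_lt (by omega)
  have hhi : n ≤ p ^ (m + 1) := by
    have : n - 1 < p ^ (m + 1) := Nat.lt_pow_succ_log_self hp.one_lt (n - 1)
    omega
  have hmℓ : m < ℓ := (Nat.pow_lt_pow_iff_right hp.one_lt).mp (hlo.trans_le hdeg)
  set X := ‖(p : K)‖ ^ (-(((m : ℝ) + 1) / (p : ℝ) ^ m)) * ε
  have hεX : ε ≤ X := le_mul_of_one_le_left hε <|
    Real.one_le_rpow_of_pos_of_le_one_of_nonpos ht hpK.le (neg_nonpos.mpr (by positivity))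
  obtain ⟨b₁, hb₁, hb₁deg, hab₁⟩ := exists_approx_natDegree_le_pow hp hpK hdense ha hlo hhi hε haut
  obtain ⟨b, hb⟩ := ih m hmℓ b₁ hb₁ hb₁deg X (hε.trans hεX) fun σ hσ =>
    norm_map_sub_self_le_of_norm_sub_le hσ hab₁ ((haut σ hσ).trans hεX)
  have hXle : X ≤ ‖(p : K)‖ ^ (-axExponent p m) * X :=
    le_mul_of_one_le_left (hε.trans hεX) <| Real.one_le_rpow_of_pos_of_le_one_of_nonpos ht hpK.le
      (neg_nonpos.mpr (Finset.sum_nonneg fun _ _ => by positivity))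
  have hmX : ‖(p : K)‖ ^ (-axExponent p m) * X ≤ ‖(p : K)‖ ^ (-axExponent p ℓ) * ε := by
    rw [← mul_assoc, ← Real.rpow_add ht, ← neg_add, ← axExponent_succ]
    exact mul_le_mul_of_nonneg_right (Real.rpow_le_rpow_of_exponent_ge ht hpK.le
      (neg_le_neg (axExponent_mono p hmℓ))) hε
  refine ⟨b, ?_⟩
  calc ‖a - algebraMap K C b‖ = ‖(a - b₁) + (b₁ - algebraMap K C b)‖ := by abel_nf
    _ ≤ _ := (IsUltrametricDist.norm_add_le_max _ _).trans
      (max_le (hab₁.trans (hXle.trans hmX)) (hb.trans hmX))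

theorem mem_range_algebraMap_of_forall_isometry_apply_eq (hp : p.Prime) (hpK : ‖(p : K)‖ < 1)
    (halg : Dense {x : C | IsAlgebraic K x}) {c : C}
    (hc : ∀ σ : C ≃ₐ[K] C, Isometry σ → σ c = c) : c ∈ Set.range (algebraMap K C) := by
  have := IsUltrametricDist.of_normedAlgebra K (L := C)
  have ht : 0 < ‖(p : K)‖ := norm_pos_iff.mpr (mod_cast hp.ne_zero)
  set M := ‖(p : K)‖ ^ (-∑' j : ℕ, ((j : ℝ) + 1) / (p : ℝ) ^ j)
  have hM : 1 ≤ M := Real.one_le_rpow_of_pos_of_le_one_of_nonpos ht hpK.le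
    (neg_nonpos.mpr (tsum_nonneg fun _ => by positivity))
  have hclosed : IsClosed (Set.range (algebraMap K C)) :=
    (AddMonoidHomClass.isometry_of_norm _ (norm_algebraMap' C)).isClosedEmbedding.isClosed_range
  refine hclosed.closure_subset (Metric.mem_closure_iff.mpr fun δ hδ => ?_)
  obtain ⟨a, ha, hca⟩ := Metric.mem_closure_iff.mp (halg c) (δ / M) (by positivity)
  have haut (σ : C ≃ₐ[K] C) (hσ : Isometry σ) : ‖σ a - a‖ ≤ dist c a :=
    norm_map_sub_self_le_of_norm_sub_le hσ (dist_eq_norm c a).ge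
      (by rw [hc σ hσ, sub_self, norm_zero]; exact dist_nonneg)
  have hdense : DenseRange ((↑) : algebraicClosure K C → C) := by
    simpa [DenseRange, Subtype.range_coe, mem_algebraicClosure_iff] using halg
  obtain ⟨b, hb⟩ := exists_norm_sub_algebraMap_le hp hpK hdense _ a
    ha.isIntegral (Nat.lt_pow_self hp.one_lt).le _ dist_nonneg haut
  refine ⟨algebraMap K C b, ⟨b, rfl⟩, ?_⟩
  calc dist c (algebraMap K C b) = ‖(c - a) + (a - algebraMap K C b)‖ := by
        rw [dist_eq_norm]; abel_nf
    _ ≤ M * dist c a := (IsUltrametricDist.norm_add_le_max _ _).trans <| max_le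
        ((dist_eq_norm c a).ge.trans (le_mul_of_one_le_left dist_nonneg hM))
        (hb.trans (mul_le_mul_of_nonneg_right (Real.rpow_le_rpow_of_exponent_ge ht hpK.le
          (neg_le_neg (axExponent_le_tsum hp.one_lt _))) dist_nonneg))
    _ < M * (δ / M) := by gcongr
    _ = δ := mul_div_cancel₀ δ (by positivity)

end AxSenTate

theorem Isometry.mem_range_of_hasSum {β R W F : Type*} [SeminormedAddCommGroup R]
    [CompleteSpace R] [NormedAddCommGroup W] [FunLike F R W] [AddMonoidHomClass F R W]
    {φ : F} (hφ : Isometry φ) {f : β → R} {x : W} (h : HasSum (fun i => φ (f i)) x) :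
    x ∈ Set.range φ :=
  hφ.isUniformInducing.isComplete_range.isClosed.mem_of_tendsto h <|
    Filter.Eventually.of_forall fun s => ⟨∑ i ∈ s, f i, map_sum φ f s⟩

theorem stmt19_general {K C R W : Type*}
    [NontriviallyNormedField K] [CompleteSpace K] [IsUltrametricDist K] [CharZero K]
    (p : ℕ) (hp : p.Prime) (hpK : ‖(p : K)‖ < 1)
    [NontriviallyNormedField C] [NormedAlgebra K C] [CompleteSpace C]
    [IsAlgClosed C]
    (halg : Dense {x : C | IsAlgebraic K x})
    [NormedCommRing R] [NormedAlgebra K R] [CompleteSpace R]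
    [NormedAddCommGroup W] [NormedSpace C W]
    [NormedSpace K W] [IsScalarTower K C W]
    (ι : R →ₗ[K] W) (hι : ∀ r : R, ‖ι r‖ = ‖r‖)
    (w : ℕ → R)
    -- `w` is a Schauder basis of `W` over `C`
    (hbasis : ∀ x : W, ∃! c : ℕ → C, HasSum (fun i => c i • ι (w i)) x)
    -- elements of `R` have expansion coefficients in `K`
    (hRcoeff : ∀ (r : R) (c : ℕ → C), HasSum (fun i => c i • ι (w i)) (ι r) →
      ∀ i, ∃ a : K, algebraMap K C a = c i) :
    ∀ x : W,
      (∀ σ : C ≃ₐ[K] C, Continuous σ → ∀ c : ℕ → C,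
        HasSum (fun i => c i • ι (w i)) x →
          HasSum (fun i => σ (c i) • ι (w i)) x) ↔ x ∈ Set.range ι := by
  intro x
  constructor
  · intro hfix
    obtain ⟨c, hc, huniq⟩ := hbasis x
    have hcK (i : ℕ) : c i ∈ Set.range (algebraMap K C) :=
      mem_range_algebraMap_of_forall_isometry_apply_eq hp hpK halg fun σ hσ =>
        congrFun (huniq _ (hfix σ hσ.continuous c hc)) i
    choose a ha using hcK
    refine (AddMonoidHomClass.isometry_of_norm ι hι).mem_range_of_hasSum
      (f := fun i => a i • w i) ?_
    simpa only [map_smul, ← ha, algebraMap_smul] using hc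
  · rintro ⟨r, rfl⟩ σ - c hc
    convert hc using 3 with i
    obtain ⟨a, ha⟩ := hRcoeff r c hc i
    rw [← ha, σ.commutes]

/-- let `R` be a `K`-affinoid (or dagger) algebra over the complete
nonarchimedean field `K` of mixed characteristic, `C` the completed algebraic
closure of `K` (a complete algebraically closed nonarchimedean field isometrically
extending `K` in which the algebraic elements are dense), and `R̂ = R ⊗̂_K C` the
completed base change, realized as a `C`-Banach space `W` with an isometric
embedding `ι : R → W` admitting a `K`-Schauder basis `w : ℕ → R`: every `x ∈ W` has
a unique convergent expansion `x = ∑ cᵢ • ι(wᵢ)` with `cᵢ ∈ C`, and elements of `R`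
are exactly characterized below as those with coefficients in `K`.  The Galois
group `G = Gal(K̄/K)` (realized as the continuous `K`-algebra automorphisms of `C`)
acts coefficientwise on `W`, and the fixed points of `W` under `G` are exactly
`R`. -/
theorem stmt19 {K C R W : Type*}
    [NontriviallyNormedField K] [CompleteSpace K] [IsUltrametricDist K] [CharZero K]
    (p : ℕ) (hp : p.Prime) (hpK : ‖(p : K)‖ < 1)
    [NontriviallyNormedField C] [NormedAlgebra K C] [CompleteSpace C]
    [IsAlgClosed C]
    (hKC : ∀ a : K, ‖algebraMap K C a‖ = ‖a‖)
    (halg : Dense {x : C | IsAlgebraic K x})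
    [NormedCommRing R] [NormedAlgebra K R] [CompleteSpace R]
    -- `R` is of countable type over `K`
    (hct : ∃ D : Set R, D.Countable ∧ Dense (Submodule.span K D : Set R))
    [NormedAddCommGroup W] [NormedSpace C W] [CompleteSpace W]
    [NormedSpace K W] [IsScalarTower K C W]
    (ι : R →ₗ[K] W) (hι : ∀ r : R, ‖ι r‖ = ‖r‖)
    (w : ℕ → R)
    -- `w` is a Schauder basis of `W` over `C`
    (hbasis : ∀ x : W, ∃! c : ℕ → C, HasSum (fun i => c i • ι (w i)) x)
    -- elements of `R` have expansion coefficients in `K`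
    (hRcoeff : ∀ (r : R) (c : ℕ → C), HasSum (fun i => c i • ι (w i)) (ι r) →
      ∀ i, ∃ a : K, algebraMap K C a = c i) :
    ∀ x : W,
      (∀ σ : C ≃ₐ[K] C, Continuous σ → ∀ c : ℕ → C,
        HasSum (fun i => c i • ι (w i)) x →
          HasSum (fun i => σ (c i) • ι (w i)) x) ↔ x ∈ Set.range ι :=
  stmt19_general p hp hpK halg ι hι w hbasis hRcoeff
end
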